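/- arXiv:0711.3879 — 6 statements merged into one kernel-verified Lean document; each statement's English description precedes it below -/
import Mathlib

section
/- Let K be a finite extension of Q₂ with ring of integers O, maximal ideal P, residual degree f = 1 and ramification index e > 1. Then (O/P³)^× has exactly one element of order 2, namely 1 + π̄², where π is any uniformizer. -/
set_option maxHeartbeats 2000000


set_option synthInstance.maxHeartbeats 1000000


lemma aux_orderTwo_unique {O : Type*} [CommRing O] [IsDomain O] {P : Ideal O}
    (hPmax : P.IsMaximal)
    (hres : ∀ x : O, x ∉ P → x - 1 ∈ P) (h2 : (2 : O) ∈ P ^ 2) (hP0 : P ≠ ⊥)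
    {π : O} (hπ : P = Ideal.span {π})
    (u : (O ⧸ P ^ 3)ˣ) (hu1 : u ≠ 1) (hu2 : u ^ 2 = 1) :
    (u : O ⧸ P ^ 3) = 1 + Ideal.Quotient.mk (P ^ 3) (π ^ 2) := by
  have hπ0 : π ≠ 0 := by rintro rfl; exact hP0 (hπ.trans (Ideal.span_singleton_eq_bot.mpr rfl))
  have hπP : π ∈ P := hπ ▸ Ideal.mem_span_singleton_self π
  obtain ⟨x, hx⟩ := Ideal.Quotient.mk_surjective (u : O ⧸ P ^ 3)
  obtain ⟨y, hy⟩ := Ideal.Quotient.mk_surjective ((u⁻¹ : (O ⧸ P ^ 3)ˣ) : O ⧸ P ^ 3)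
  have hxy : x * y - 1 ∈ P ^ 3 := by
    rw [← Ideal.Quotient.eq, map_mul, map_one, hx, hy]
    exact_mod_cast u.mul_inv
  have hxP : x ∉ P := by
    intro hxP
    have h1P : (1 : O) ∈ P := by
      have := P.sub_mem (Ideal.mul_mem_right y P hxP)
        ((Ideal.pow_le_self (by norm_num)) hxy)
      simpa using this
    exact hPmax.ne_top (Ideal.eq_top_of_isUnit_mem P h1P isUnit_one)
  have hyP : x - 1 ∈ P := hres x hxP
  have hx2 : x ^ 2 - 1 ∈ P ^ 3 := by
    rw [← Ideal.Quotient.eq, map_pow, map_one, hx]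
    have : ((u : O ⧸ P ^ 3)) ^ 2 = ((u ^ 2 : (O ⧸ P ^ 3)ˣ) : O ⧸ P ^ 3) := by
      push_cast; ring
    rw [this, hu2, Units.val_one]
  have h2y : 2 * (x - 1) ∈ P ^ 3 := by
    have := Ideal.mul_mem_mul h2 hyP
    rwa [← pow_succ] at this
  have hysq : (x - 1) ^ 2 ∈ P ^ 3 := by
    have heq : (x - 1) ^ 2 = (x ^ 2 - 1) - 2 * (x - 1) := by ring
    rw [heq]; exact (P ^ 3).sub_mem hx2 h2y
  obtain ⟨t, ht⟩ : π ∣ x - 1 := by rwa [hπ, Ideal.mem_span_singleton] at hyP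
  have htP : t ∈ P := by
    have h3 : π ^ 3 ∣ (x - 1) ^ 2 := by
      rwa [hπ, Ideal.span_singleton_pow, Ideal.mem_span_singleton] at hysq
    have hdvd : π ^ 2 * π ∣ π ^ 2 * t ^ 2 := by
      have heq2 : (x - 1) ^ 2 = π ^ 2 * t ^ 2 := by rw [ht]; ring
      rw [heq2, pow_succ] at h3
      exact h3
    have : π ∣ t ^ 2 := (mul_dvd_mul_iff_left (pow_ne_zero 2 hπ0)).mp hdvd
    exact hPmax.isPrime.mem_of_pow_mem 2 (by rwa [hπ, Ideal.mem_span_singleton])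
  obtain ⟨r, hr⟩ : π ∣ t := by rwa [hπ, Ideal.mem_span_singleton] at htP
  have hxr : x - 1 = π ^ 2 * r := by rw [ht, hr]; ring
  have hrP : r ∉ P := by
    intro hrP
    apply hu1
    apply Units.ext
    rw [Units.val_one, ← hx, show (1 : O ⧸ P ^ 3) = Ideal.Quotient.mk (P ^ 3) 1 from (map_one _).symm]
    rw [Ideal.Quotient.eq]
    have : x - 1 ∈ P ^ 2 * P := by
      rw [hxr]; exact Ideal.mul_mem_mul (Ideal.pow_mem_pow hπP 2) hrP
    rwa [← pow_succ] at this
  have hr1 : r - 1 ∈ P := hres r hrP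
  have hfinal : x - (1 + π ^ 2) ∈ P ^ 3 := by
    have heq : x - (1 + π ^ 2) = π ^ 2 * (r - 1) := by
      rw [← sub_sub, hxr]; ring
    have hmem : π ^ 2 * (r - 1) ∈ P ^ 2 * P :=
      Ideal.mul_mem_mul (Ideal.pow_mem_pow hπP 2) hr1
    rw [heq]
    rwa [← pow_succ] at hmem
  rw [← hx, show (1 : O ⧸ P ^ 3) + Ideal.Quotient.mk (P ^ 3) (π ^ 2)
      = Ideal.Quotient.mk (P ^ 3) (1 + π ^ 2) from by rw [map_add, map_one]]
  exact Ideal.Quotient.eq.mpr hfinal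

lemma aux_orderTwo_exists {O : Type*} [CommRing O] [IsDomain O] {P : Ideal O}
    (hPmax : P.IsMaximal) (h2 : (2 : O) ∈ P ^ 2) (hP0 : P ≠ ⊥)
    {π : O} (hπ : P = Ideal.span {π}) :
    ∃ u : (O ⧸ P ^ 3)ˣ, (u ≠ 1 ∧ u ^ 2 = 1) ∧
      (u : O ⧸ P ^ 3) = 1 + Ideal.Quotient.mk (P ^ 3) (π ^ 2) := by
  have hπ0 : π ≠ 0 := by rintro rfl; exact hP0 (hπ.trans (Ideal.span_singleton_eq_bot.mpr rfl))
  have hπP : π ∈ P := hπ ▸ Ideal.mem_span_singleton_self π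
  set a : O ⧸ P ^ 3 := Ideal.Quotient.mk (P ^ 3) (π ^ 2) with ha
  have hπ4 : π ^ 4 ∈ P ^ 3 := Ideal.pow_le_pow_right (by norm_num) (Ideal.pow_mem_pow hπP 4)
  have ha2 : a ^ 2 = 0 := by
    rw [ha, ← map_pow, ← pow_mul]
    exact Ideal.Quotient.eq_zero_iff_mem.mpr hπ4
  have h2a : 2 * a = 0 := by
    have h2π : 2 * π ^ 2 ∈ P ^ 3 := by
      have := Ideal.mul_mem_mul h2 (Ideal.pow_mem_pow hπP 2)
      rw [← pow_add] at this
      exact Ideal.pow_le_pow_right (by norm_num) this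
    have : Ideal.Quotient.mk (P ^ 3) (2 * π ^ 2) = 0 := Ideal.Quotient.eq_zero_iff_mem.mpr h2π
    rwa [map_mul, map_ofNat] at this
  have hmul : (1 + a) * (1 - a) = 1 := by
    have : (1 + a) * (1 - a) = 1 - a ^ 2 := by ring
    rw [this, ha2, sub_zero]
  refine ⟨⟨1 + a, 1 - a, hmul, by rw [mul_comm]; exact hmul⟩, ⟨?_, ?_⟩, rfl⟩
  · intro h
    have hcoe : (1 : O ⧸ P ^ 3) + a = 1 := congrArg Units.val h
    have ha0 : a = 0 := by linear_combination hcoe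
    have hπ2 : π ^ 2 ∈ P ^ 3 := Ideal.Quotient.eq_zero_iff_mem.mp ha0
    have hdvd : π ^ 3 ∣ π ^ 2 := by
      rwa [hπ, Ideal.span_singleton_pow, Ideal.mem_span_singleton] at hπ2
    have : π ^ 2 * π ∣ π ^ 2 * 1 := by
      rw [mul_one, ← pow_succ]; exact hdvd
    have hπ1 : π ∣ 1 := (mul_dvd_mul_iff_left (pow_ne_zero 2 hπ0)).mp this
    exact hPmax.ne_top (Ideal.eq_top_of_isUnit_mem P hπP (isUnit_of_dvd_one hπ1))
  · apply Units.ext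
    rw [Units.val_pow_eq_pow_val, Units.val_one]
    show (1 + a) ^ 2 = 1
    have : (1 + a) ^ 2 = 1 + (2 * a + a ^ 2) := by ring
    rw [this, h2a, ha2, add_zero, add_zero]


/-- For `K` a finite extension of `ℚ₂` with ring of integers `O`, maximal ideal `P`,
residual degree `f = 1` and ramification index `e > 1`, the group `(O/P³)ˣ` has exactly
one element of order 2, namely `1 + π̄²` for any uniformizer `π`. -/
theorem local_units_unique_orderTwo_P3
    (K : Type*) [Field K] [Algebra ℚ_[2] K] [FiniteDimensional ℚ_[2] K]
    [Algebra ℤ_[2] K] [IsScalarTower ℤ_[2] ℚ_[2] K]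
    (P : Ideal (integralClosure ℤ_[2] K)) (hPmax : P.IsMaximal)
    (hPuniq : ∀ Q : Ideal (integralClosure ℤ_[2] K), Q.IsMaximal → Q = P)
    (hf : Ideal.inertiaDeg'
      (IsLocalRing.maximalIdeal ℤ_[2]) P = 1)
    (he : 1 < Ideal.ramificationIdx'
      (IsLocalRing.maximalIdeal ℤ_[2]) P) :
    (∃! u : ((integralClosure ℤ_[2] K) ⧸ P ^ 3)ˣ, u ≠ 1 ∧ u ^ 2 = 1) ∧
      ∀ π : integralClosure ℤ_[2] K, P = Ideal.span {π} →
        ∀ u : ((integralClosure ℤ_[2] K) ⧸ P ^ 3)ˣ, u ≠ 1 → u ^ 2 = 1 →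
          (u : (integralClosure ℤ_[2] K) ⧸ P ^ 3) = 1 + Ideal.Quotient.mk (P ^ 3) (π ^ 2) := by

  classical
  haveI : CharZero K := charZero_of_injective_algebraMap (algebraMap ℚ_[2] K).injective
  haveI : IsLocalRing (integralClosure ℤ_[2] K) :=
    IsLocalRing.of_unique_max_ideal ⟨P, hPmax, fun I hI => hPuniq I hI⟩
  haveI : IsDedekindDomain (integralClosure ℤ_[2] K) :=
    integralClosure.isDedekindDomain ℤ_[2] ℚ_[2] K
  -- 2 ∈ P^2
  have h2m : (2 : ℤ_[2]) ∈ IsLocalRing.maximalIdeal ℤ_[2] := by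
    rw [PadicInt.maximalIdeal_eq_span_p]
    exact_mod_cast Ideal.mem_span_singleton_self _
  have h2 : (2 : integralClosure ℤ_[2] K) ∈ P ^ 2 := by
    have hle := Ideal.le_pow_of_le_ramificationIdx' (n := 2) he
    have := hle (Ideal.mem_map_of_mem _ h2m)
    rwa [map_ofNat] at this
  have hP0 : P ≠ ⊥ := by
    rintro rfl
    have : (2 : integralClosure ℤ_[2] K) = 0 := by
      have := (Ideal.pow_le_self (n := 2) (by norm_num)) h2
      simpa using this
    exact two_ne_zero this
  -- residue field fact
  have hres : ∀ x : integralClosure ℤ_[2] K, x ∉ P → x - 1 ∈ P := by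
    rw [Ideal.inertiaDeg'] at hf
    split_ifs at hf with hc
    letI : Algebra (ℤ_[2] ⧸ IsLocalRing.maximalIdeal ℤ_[2]) ((integralClosure ℤ_[2] K) ⧸ P) :=
      Ideal.Quotient.algebraQuotientOfLEComap (le_of_eq hc.symm)
    letI : Field (ℤ_[2] ⧸ IsLocalRing.maximalIdeal ℤ_[2]) := Ideal.Quotient.field _
    haveI : Nontrivial ((integralClosure ℤ_[2] K) ⧸ P) := Ideal.Quotient.nontrivial_iff.mpr hPmax.ne_top
    have htop := Subalgebra.bot_eq_top_of_finrank_eq_one hf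
    intro x hxP
    have hx : Ideal.Quotient.mk P x ∈
        (⊥ : Subalgebra (ℤ_[2] ⧸ IsLocalRing.maximalIdeal ℤ_[2]) ((integralClosure ℤ_[2] K) ⧸ P)) := by
      rw [htop]; trivial
    obtain ⟨a, ha⟩ := Algebra.mem_bot.mp hx
    obtain ⟨z, rfl⟩ := Ideal.Quotient.mk_surjective a
    have ha' : Ideal.Quotient.mk P ((algebraMap ℤ_[2] (integralClosure ℤ_[2] K)) z)
        = Ideal.Quotient.mk P x := by
      rw [← ha]; rfl
    have hzz : PadicInt.toZMod z = 0 ∨ PadicInt.toZMod z = 1 := by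
      generalize PadicInt.toZMod z = c; revert c; decide
    have hker : ∀ w : ℤ_[2], PadicInt.toZMod w = 0 → w ∈ IsLocalRing.maximalIdeal ℤ_[2] := by
      intro w hw
      rw [← PadicInt.ker_toZMod]
      exact hw
    rcases hzz with hz0 | hz1
    · exfalso
      apply hxP
      have hzm : z ∈ IsLocalRing.maximalIdeal ℤ_[2] := hker z hz0
      have : (algebraMap ℤ_[2] (integralClosure ℤ_[2] K)) z ∈ P := by
        rw [← hc] at hzm; exact hzm
      have := Ideal.Quotient.eq.mp ha'
      have hx' : x ∈ P := by
        have := P.sub_mem ‹(algebraMap ℤ_[2] (integralClosure ℤ_[2] K)) z ∈ P› this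
        simpa using this
      exact hx'
    · have hz1m : z - 1 ∈ IsLocalRing.maximalIdeal ℤ_[2] := by
        apply hker
        rw [map_sub, hz1, map_one, sub_self]
      have hfz1 : (algebraMap ℤ_[2] (integralClosure ℤ_[2] K)) z - 1 ∈ P := by
        have : (algebraMap ℤ_[2] (integralClosure ℤ_[2] K)) (z - 1) ∈ P := by
          rw [← hc] at hz1m; exact hz1m
        rwa [map_sub, map_one] at this
      have hsub := Ideal.Quotient.eq.mp ha'
      have : x - 1 = ((algebraMap ℤ_[2] (integralClosure ℤ_[2] K)) z - 1)
          - ((algebraMap ℤ_[2] (integralClosure ℤ_[2] K)) z - x) := by ring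
      rw [this]
      exact P.sub_mem hfz1 hsub
  -- principal generator
  have hPm : P = IsLocalRing.maximalIdeal (integralClosure ℤ_[2] K) :=
    IsLocalRing.eq_maximalIdeal hPmax
  obtain ⟨π0, hπ0⟩ := (maximalIdeal_isPrincipal_of_isDedekindDomain
    (R := integralClosure ℤ_[2] K)).principal
  have hπ0' : P = Ideal.span {π0} := by rw [hPm]; exact_mod_cast hπ0
  obtain ⟨u0, ⟨hu0a, hu0b⟩, hu0c⟩ := aux_orderTwo_exists hPmax h2 hP0 hπ0'
  refine ⟨⟨u0, ⟨hu0a, hu0b⟩, ?_⟩, ?_⟩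
  · rintro v ⟨hv1, hv2⟩
    apply Units.ext
    rw [aux_orderTwo_unique hPmax hres h2 hP0 hπ0' v hv1 hv2, hu0c]
  · intro π hπ u hu1 hu2
    exact aux_orderTwo_unique hPmax hres h2 hP0 hπ u hu1 hu2
end

section
/- Let K be a finite extension of Q₂ with ring of integers O, maximal ideal P generated by π, residual degree f = 1 and ramification index e > 1. Then the quotient U₁/U₃ of principal units is cyclic of order 4, generated by the class of 1 + π. -/
set_option synthInstance.maxHeartbeats 1000000
set_option maxHeartbeats 2000000

/-- For `K` a finite extension of `ℚ₂` with ring of integers `O`, maximal ideal `P = (π)`,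
residual degree `f = 1` and ramification index `e > 1`, the group `U₁/U₃` of principal
units mod `P³` is cyclic of order 4, generated by the class of `1 + π`. -/
theorem principal_units_mod_P3_cyclic
    (K : Type*) [Field K] [Algebra ℚ_[2] K] [FiniteDimensional ℚ_[2] K]
    [Algebra ℤ_[2] K] [IsScalarTower ℤ_[2] ℚ_[2] K]
    (P : Ideal (integralClosure ℤ_[2] K)) (hPmax : P.IsMaximal)
    (hPuniq : ∀ Q : Ideal (integralClosure ℤ_[2] K), Q.IsMaximal → Q = P)
    (π : integralClosure ℤ_[2] K) (hπ : P = Ideal.span {π})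
    (hf : Ideal.inertiaDeg'
      (IsLocalRing.maximalIdeal ℤ_[2]) P = 1)
    (he : 1 < Ideal.ramificationIdx'
      (IsLocalRing.maximalIdeal ℤ_[2]) P)
    (u : ((integralClosure ℤ_[2] K) ⧸ P ^ 3)ˣ)
    (hu : (u : (integralClosure ℤ_[2] K) ⧸ P ^ 3) = 1 + Ideal.Quotient.mk (P ^ 3) π) :
    orderOf u = 4 ∧
      ∀ v : ((integralClosure ℤ_[2] K) ⧸ P ^ 3)ˣ,
        (v : (integralClosure ℤ_[2] K) ⧸ P ^ 3) - 1 ∈ P.map (Ideal.Quotient.mk (P ^ 3)) →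
          v ∈ Subgroup.zpowers u := by
  classical
  -- comap of P is the maximal ideal
  have hcomap : Ideal.comap (algebraMap ℤ_[2] (integralClosure ℤ_[2] K)) P
      = IsLocalRing.maximalIdeal ℤ_[2] := by
    by_contra h
    rw [Ideal.inertiaDeg', dif_neg h] at hf
    exact one_ne_zero hf.symm
  haveI hLO : P.LiesOver (IsLocalRing.maximalIdeal ℤ_[2]) := ⟨hcomap.symm⟩
  rw [Ideal.inertiaDeg'_algebraMap] at hf
  -- the maximal ideal maps into P^2
  have hmap2 : ∀ r : ℤ_[2], r ∈ IsLocalRing.maximalIdeal ℤ_[2] →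
      algebraMap ℤ_[2] (integralClosure ℤ_[2] K) r ∈ P ^ 2 := fun r hr =>
    Ideal.le_pow_of_le_ramificationIdx' he (Ideal.mem_map_of_mem _ hr)
  -- residue field of ℤ_[2]
  have hz2 : ∀ r : ℤ_[2], r ∈ IsLocalRing.maximalIdeal ℤ_[2] ∨
      r - 1 ∈ IsLocalRing.maximalIdeal ℤ_[2] := by
    intro r
    have hall : ∀ z : ZMod 2, z = 0 ∨ z = 1 := by decide
    rcases hall (PadicInt.toZMod r) with h | h
    · left; rw [← PadicInt.ker_toZMod]; exact h
    · right; rw [← PadicInt.ker_toZMod]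
      show PadicInt.toZMod (r - 1) = 0
      rw [map_sub, map_one, h, sub_self]
  -- residue field of O has two elements
  have hres : ∀ a : integralClosure ℤ_[2] K, a ∈ P ∨ a - 1 ∈ P := by
    intro a
    haveI : Nontrivial ((integralClosure ℤ_[2] K) ⧸ P) := Ideal.Quotient.nontrivial_iff.mpr hPmax.ne_top
    letI : Field (ℤ_[2] ⧸ IsLocalRing.maximalIdeal ℤ_[2]) := Ideal.Quotient.field _
    have h1 : (1 : (integralClosure ℤ_[2] K) ⧸ P) ≠ 0 := one_ne_zero
    obtain ⟨c, hc⟩ := (finrank_eq_one_iff_of_nonzero'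
      (1 : (integralClosure ℤ_[2] K) ⧸ P) h1).mp hf (Ideal.Quotient.mk P a)
    obtain ⟨r, rfl⟩ := Ideal.Quotient.mk_surjective c
    rw [Algebra.smul_def, mul_one] at hc
    have halg : algebraMap (ℤ_[2] ⧸ IsLocalRing.maximalIdeal ℤ_[2])
        ((integralClosure ℤ_[2] K) ⧸ P) (Ideal.Quotient.mk _ r)
        = Ideal.Quotient.mk P (algebraMap ℤ_[2] (integralClosure ℤ_[2] K) r) := rfl
    rw [halg] at hc
    have hsub : algebraMap ℤ_[2] (integralClosure ℤ_[2] K) r - a ∈ P :=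
      (Ideal.Quotient.mk_eq_mk_iff_sub_mem _ _).mp hc
    rcases hz2 r with hr | hr
    · left
      have : algebraMap ℤ_[2] (integralClosure ℤ_[2] K) r ∈ P :=
        (Ideal.pow_le_self two_ne_zero) (hmap2 r hr)
      have := P.sub_mem this hsub
      simpa using this
    · right
      have h2 : algebraMap ℤ_[2] (integralClosure ℤ_[2] K) (r - 1) ∈ P :=
        (Ideal.pow_le_self two_ne_zero) (hmap2 _ hr)
      rw [map_sub, map_one] at h2
      have := P.sub_mem h2 hsub
      simpa using this
  -- 2 ∈ P^2, written with π
  have h2m : (2 : ℤ_[2]) ∈ IsLocalRing.maximalIdeal ℤ_[2] := by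
    rw [← PadicInt.ker_toZMod]
    show PadicInt.toZMod (2 : ℤ_[2]) = 0
    rw [map_ofNat]
    decide
  have h2P : (2 : integralClosure ℤ_[2] K) ∈ P ^ 2 := by
    have := hmap2 2 h2m
    rwa [map_ofNat] at this
  rw [hπ, Ideal.span_singleton_pow, Ideal.mem_span_singleton'] at h2P
  obtain ⟨c, hc⟩ := h2P
  -- hc : c * π ^ 2 = 2
  haveI : CharZero K := charZero_of_injective_algebraMap (algebraMap ℚ_[2] K).injective
  have h2ne : (2 : integralClosure ℤ_[2] K) ≠ 0 := by
    intro h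
    have h' : ((2 : integralClosure ℤ_[2] K) : K) = ((0 : integralClosure ℤ_[2] K) : K) := by
      rw [h]
    push_cast at h'
    norm_num at h'
  have hπ0 : π ≠ 0 := by
    rintro rfl
    rw [mul_comm, zero_pow two_ne_zero, zero_mul] at hc
    exact h2ne hc.symm
  have hπu : ¬ IsUnit π := fun h =>
    hPmax.ne_top (by rw [hπ]; exact Ideal.span_singleton_eq_top.mpr h)
  -- membership criterion for the quotient mod P^3
  have hP3 : P ^ 3 = Ideal.span {π ^ 3} := by rw [hπ, Ideal.span_singleton_pow]
  have hmem : ∀ x y : integralClosure ℤ_[2] K,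
      Ideal.Quotient.mk (P ^ 3) x = Ideal.Quotient.mk (P ^ 3) y ↔ π ^ 3 ∣ x - y := by
    intro x y
    rw [Ideal.Quotient.mk_eq_mk_iff_sub_mem, hP3, Ideal.mem_span_singleton]
  have hcu : (u : (integralClosure ℤ_[2] K) ⧸ P ^ 3) = Ideal.Quotient.mk (P ^ 3) (1 + π) := by
    rw [hu, map_add, map_one]
  -- u ^ 4 = 1
  have hu4 : u ^ 4 = 1 := by
    rw [← Units.val_eq_one, Units.val_pow_eq_pow_val, hcu, ← map_pow,
      show (1 : (integralClosure ℤ_[2] K) ⧸ P ^ 3) = Ideal.Quotient.mk (P ^ 3) 1 from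
        (map_one _).symm]
    exact (hmem _ _).mpr ⟨2 * c + 3 * c * π + 4 + π, by linear_combination (-(2*π) - 3*π^2) * hc⟩
  -- u ^ 2 ≠ 1
  have hu2 : u ^ 2 ≠ 1 := by
    intro h
    have hval : Ideal.Quotient.mk (P ^ 3) ((1 + π) ^ 2) = Ideal.Quotient.mk (P ^ 3) 1 := by
      rw [map_pow, ← hcu, map_one, ← Units.val_pow_eq_pow_val, h, Units.val_one]
    obtain ⟨d, hd⟩ := (hmem _ _).mp hval
    have hkey : π ^ 2 * (c * π + 1 - π * d) = 0 := by linear_combination π * hc + hd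
    rcases mul_eq_zero.mp hkey with h0 | h0
    · exact hπ0 (pow_eq_zero_iff two_ne_zero |>.mp h0)
    · exact hπu (IsUnit.of_mul_eq_one (a := π) (d - c) (by linear_combination -h0))
  constructor
  · have horder : orderOf u = 2 ^ (1 + 1) :=
      orderOf_eq_prime_pow (by norm_num; exact hu2) (by norm_num; exact hu4)
    simpa using horder
  · intro v hv
    obtain ⟨y, hyP, hy⟩ := (Ideal.mem_map_iff_of_surjective _
      Ideal.Quotient.mk_surjective).mp hv
    have step : ∀ k : ℕ, π ^ 3 ∣ (1 + π) ^ k - (1 + y) → v ∈ Subgroup.zpowers u := by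
      intro k hdvd
      have hv' : v = u ^ k := by
        apply Units.ext
        rw [Units.val_pow_eq_pow_val, hcu, ← map_pow]
        have hvv : (v : (integralClosure ℤ_[2] K) ⧸ P ^ 3)
            = Ideal.Quotient.mk (P ^ 3) (1 + y) := by
          rw [map_add, map_one, hy]; ring
        rw [hvv]
        exact ((hmem _ _).mpr hdvd).symm
      rw [hv']
      exact Subgroup.npow_mem_zpowers u k
    rw [hπ, Ideal.mem_span_singleton'] at hyP
    obtain ⟨a, rfl⟩ := hyP
    rcases hres a with ha | ha
    · rw [hπ, Ideal.mem_span_singleton'] at ha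
      obtain ⟨b, rfl⟩ := ha
      rcases hres b with hb | hb
      · rw [hπ, Ideal.mem_span_singleton'] at hb
        obtain ⟨d, rfl⟩ := hb
        exact step 0 ⟨-d, by ring⟩
      · rw [hπ, Ideal.mem_span_singleton'] at hb
        obtain ⟨d, hd⟩ := hb
        exact step 2 ⟨c - d, by linear_combination (-π) * hc + π^2 * hd⟩
    · rw [hπ, Ideal.mem_span_singleton'] at ha
      obtain ⟨b, hb⟩ := ha
      rcases hres b with hb' | hb'
      · rw [hπ, Ideal.mem_span_singleton'] at hb'
        obtain ⟨d, rfl⟩ := hb'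
        exact step 1 ⟨-d, by linear_combination π * hb⟩
      · rw [hπ, Ideal.mem_span_singleton'] at hb'
        obtain ⟨d, hd⟩ := hb'
        exact step 3 ⟨c + c * π + 1 - d, by
          linear_combination π * hb + π^2 * hd - (π + π^2) * hc⟩
end

section
/- Let K be a finite extension of Q₂ with ring of integers O and maximal ideal P generated by π. Then for every a ∈ O, (1 + aπ)⁴ ≡ 1 (mod P⁴) provided the ramification index e > 1. Consequently U₁/U₄ is not cyclic when e > 1 and f = 1. -/
set_option synthInstance.maxHeartbeats 1000000
set_option maxHeartbeats 1000000

/-- In a group, if `u ^ 4 = 1`, `u ^ 2 ≠ 1`, and `x` is a square root of `1` in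
`zpowers u` other than `1`, then `x = u ^ 2`. -/
lemma aux_sqrt_one {G : Type*} [Group G] {u x : G} (hu4 : u ^ 4 = 1) (hu2 : u ^ 2 ≠ 1)
    (hx : x ∈ Subgroup.zpowers u) (hx2 : x ^ 2 = 1) (hx1 : x ≠ 1) : x = u ^ 2 := by
  obtain ⟨m, hm⟩ := hx
  have hm' : u ^ m = x := hm
  subst hm'
  have hdvd : orderOf u ∣ 4 := orderOf_dvd_of_pow_eq_one hu4
  have h1 : orderOf u ≠ 1 := by
    intro h
    rw [orderOf_eq_one_iff] at h
    exact hu2 (by rw [h]; simp)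
  have h2 : orderOf u ≠ 2 := fun h => hu2 (h ▸ pow_orderOf_eq_one u)
  have hord : orderOf u = 4 := by
    have hle := Nat.le_of_dvd (by norm_num) hdvd
    interval_cases (orderOf u) <;> omega
  have hzm : u ^ (m * 2) = 1 := by
    rw [zpow_mul]
    exact_mod_cast hx2
  have h4dvd : (4 : ℤ) ∣ m * 2 := by
    have := orderOf_dvd_iff_zpow_eq_one.mpr hzm
    rw [hord] at this
    exact_mod_cast this
  have h2m : (2 : ℤ) ∣ m := by omega
  obtain ⟨k, rfl⟩ := h2m
  rcases Int.even_or_odd k with ⟨j, rfl⟩ | ⟨j, rfl⟩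
  · exfalso
    apply hx1
    have h4j : (2 * (j + j) : ℤ) = 4 * j := by ring
    rw [h4j, zpow_mul]
    norm_cast
    rw [hu4]
    simp
  · have h4j : (2 * (2 * j + 1) : ℤ) = 4 * j + 2 := by ring
    rw [h4j, zpow_add, zpow_mul]
    norm_cast
    rw [hu4]
    simp

/-- For `K` a finite extension of `ℚ₂` with ring of integers `O` and maximal ideal
`P = (π)`, if the ramification index `e > 1` then `(1 + aπ)⁴ ≡ 1 (mod P⁴)` for every
`a ∈ O`; consequently, when moreover `f = 1`, the group `U₁/U₄` is not cyclic. -/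
theorem principal_units_mod_P4_not_cyclic
    (K : Type*) [Field K] [Algebra ℚ_[2] K] [FiniteDimensional ℚ_[2] K]
    [Algebra ℤ_[2] K] [IsScalarTower ℤ_[2] ℚ_[2] K]
    (P : Ideal (integralClosure ℤ_[2] K)) (hPmax : P.IsMaximal)
    (hPuniq : ∀ Q : Ideal (integralClosure ℤ_[2] K), Q.IsMaximal → Q = P)
    (π : integralClosure ℤ_[2] K) (hπ : P = Ideal.span {π})
    (he : 1 < Ideal.ramificationIdx'
      (IsLocalRing.maximalIdeal ℤ_[2]) P) :
    (∀ a : integralClosure ℤ_[2] K, (1 + a * π) ^ 4 - 1 ∈ P ^ 4) ∧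
      (Ideal.inertiaDeg'
          (IsLocalRing.maximalIdeal ℤ_[2]) P = 1 →
        ¬ ∃ u : ((integralClosure ℤ_[2] K) ⧸ P ^ 4)ˣ,
            (u : (integralClosure ℤ_[2] K) ⧸ P ^ 4) - 1 ∈ P.map (Ideal.Quotient.mk (P ^ 4)) ∧
            ∀ v : ((integralClosure ℤ_[2] K) ⧸ P ^ 4)ˣ,
              (v : (integralClosure ℤ_[2] K) ⧸ P ^ 4) - 1 ∈ P.map (Ideal.Quotient.mk (P ^ 4)) →
                v ∈ Subgroup.zpowers u) := by
  classical
  haveI : P.IsMaximal := hPmax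
  haveI : P.IsPrime := hPmax.isPrime
  haveI hDD : IsDedekindDomain (integralClosure ℤ_[2] K) := integralClosure.isDedekindDomain ℤ_[2] ℚ_[2] K
  -- `2 ∈ P ^ 2`
  have hπP : π ∈ P := by rw [hπ]; exact Ideal.mem_span_singleton_self π
  have h2mem : (2 : integralClosure ℤ_[2] K) ∈ P ^ 2 := by
    have hle : Ideal.map (algebraMap ℤ_[2] (integralClosure ℤ_[2] K)) (IsLocalRing.maximalIdeal ℤ_[2]) ≤ P ^ 2 :=
      Ideal.le_pow_of_le_ramificationIdx' he
    have h2 : (2 : ℤ_[2]) ∈ IsLocalRing.maximalIdeal ℤ_[2] := by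
      rw [PadicInt.maximalIdeal_eq_span_p]
      exact_mod_cast Ideal.mem_span_singleton_self _
    have := Ideal.mem_map_of_mem (algebraMap ℤ_[2] (integralClosure ℤ_[2] K)) h2
    rw [map_ofNat] at this
    exact hle this
  -- part 1
  have h4mem : (4 : integralClosure ℤ_[2] K) ∈ P ^ 4 := by
    have := Ideal.mul_mem_mul h2mem h2mem
    rw [← pow_add] at this
    norm_num at this
    exact this
  have h2π2 : (2 : integralClosure ℤ_[2] K) * π ^ 2 ∈ P ^ 4 := by
    have := Ideal.mul_mem_mul h2mem (Ideal.pow_mem_pow hπP 2)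
    rwa [← pow_add] at this
  have hπ4 : π ^ 4 ∈ P ^ 4 := Ideal.pow_mem_pow hπP 4
  have part1 : ∀ a : integralClosure ℤ_[2] K, (1 + a * π) ^ 4 - 1 ∈ P ^ 4 := by
    intro a
    have hring : (1 + a * π) ^ 4 - 1 =
        4 * (a * π) + (2 * π ^ 2) * (3 * a ^ 2) + 4 * (a ^ 3 * π ^ 3) + π ^ 4 * a ^ 4 := by
      ring
    rw [hring]
    exact add_mem (add_mem (add_mem (Ideal.mul_mem_right _ _ h4mem)
      (Ideal.mul_mem_right _ _ h2π2)) (Ideal.mul_mem_right _ _ h4mem))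
      (Ideal.mul_mem_right _ _ hπ4)
  refine ⟨part1, ?_⟩
  intro _hf ⟨u, hu1, hu2⟩
  -- strictness of powers of `P`
  haveI : CharZero K := charZero_of_injective_algebraMap (algebraMap ℚ_[2] K).injective
  have h2ne : (2 : integralClosure ℤ_[2] K) ≠ 0 := by
    intro h
    have h0 : ((2 : integralClosure ℤ_[2] K) : K) = 0 := by
      rw [h]
      exact ZeroMemClass.coe_zero _
    have h2K : ((2 : integralClosure ℤ_[2] K) : K) = 2 := by norm_cast
    rw [h2K] at h0
    norm_num at h0
  have hPne : P ≠ ⊥ := by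
    intro h
    rw [h, ← Ideal.zero_eq_bot, zero_pow (by norm_num : (2:ℕ) ≠ 0), Ideal.zero_eq_bot] at h2mem
    exact h2ne (Ideal.mem_bot.mp h2mem)
  have hπ2 : π ^ 2 ∉ P ^ 3 := by
    intro h
    have hP2 : P ^ 2 = Ideal.span {π ^ 2} := by rw [hπ, Ideal.span_singleton_pow]
    have hle : P ^ 2 ≤ P ^ 3 := by
      rw [hP2, Ideal.span_le]
      simpa using h
    exact (Ideal.pow_succ_lt_pow hPne 2).not_ge hle
  have hπ3 : π ^ 3 ∉ P ^ 4 := by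
    intro h
    have hP3 : P ^ 3 = Ideal.span {π ^ 3} := by rw [hπ, Ideal.span_singleton_pow]
    have hle : P ^ 3 ≤ P ^ 4 := by
      rw [hP3, Ideal.span_le]
      simpa using h
    exact (Ideal.pow_succ_lt_pow hPne 3).not_ge hle
  have hP43 : P ^ 4 ≤ P ^ 3 := Ideal.pow_le_pow_right (by norm_num)
  have hπ2' : π ^ 2 ∉ P ^ 4 := fun h => hπ2 (hP43 h)
  have h2π : (2 : integralClosure ℤ_[2] K) * π ∈ P ^ 3 := by
    have := Ideal.mul_mem_mul h2mem hπP
    rwa [← pow_succ] at this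
  -- key non-membership facts
  have hw1 : (2 : integralClosure ℤ_[2] K) * π + π ^ 2 ∉ P ^ 4 := by
    intro h
    apply hπ2
    have : π ^ 2 = ((2 : integralClosure ℤ_[2] K) * π + π ^ 2) - 2 * π := by ring
    rw [this]
    exact sub_mem (hP43 h) h2π
  have hw23 : π ^ 2 - π ^ 3 ∉ P ^ 4 := by
    intro h
    apply hπ2
    have : π ^ 2 = (π ^ 2 - π ^ 3) + π ^ 3 := by ring
    rw [this]
    exact add_mem (hP43 h) (Ideal.pow_mem_pow hπP 3)
  -- quotient setup
  set mk : _ →+* (integralClosure ℤ_[2] K) ⧸ P ^ 4 := Ideal.Quotient.mk (P ^ 4) with hmkdef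
  have hmk_one : ∀ x : integralClosure ℤ_[2] K, mk x = 1 ↔ x - 1 ∈ P ^ 4 := by
    intro x
    rw [show (1 : (integralClosure ℤ_[2] K) ⧸ P ^ 4) = mk 1 from (map_one mk).symm, Ideal.Quotient.eq]
  -- units 1 + c for c ∈ P
  have hunit : ∀ c : integralClosure ℤ_[2] K, c ∈ P → IsUnit (mk (1 + c)) := by
    intro c hc
    refine IsUnit.of_mul_eq_one (mk (1 - c + c ^ 2 - c ^ 3)) ?_
    rw [← map_mul, hmk_one]
    have : (1 + c) * (1 - c + c ^ 2 - c ^ 3) - 1 = -(c ^ 4) := by ring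
    rw [this]
    exact neg_mem (Ideal.pow_mem_pow hc 4)
  have hπ2P : π ^ 2 ∈ P := by rw [sq]; exact Ideal.mul_mem_left _ _ hπP
  have hπ3P : π ^ 3 ∈ P := by rw [pow_succ]; exact Ideal.mul_mem_left _ _ hπP
  -- the three units
  have humem : ∀ (c : integralClosure ℤ_[2] K) (hc : c ∈ P),
      ((hunit c hc).unit : ((integralClosure ℤ_[2] K) ⧸ P ^ 4)) - 1 ∈ P.map mk := by
    intro c hc
    rw [IsUnit.unit_spec]
    have : mk (1 + c) - 1 = mk c := by
      rw [map_add, map_one]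
      ring
    rw [this]
    exact Ideal.mem_map_of_mem _ hc
  -- u ^ 4 = 1
  have hu4 : u ^ 4 = 1 := by
    obtain ⟨p, hpP, hpeq⟩ : ∃ p ∈ P, mk p = (u : (integralClosure ℤ_[2] K) ⧸ P ^ 4) - 1 := by
      rwa [Ideal.mem_map_iff_of_surjective _ Ideal.Quotient.mk_surjective] at hu1
    obtain ⟨a, ha⟩ : ∃ a : integralClosure ℤ_[2] K, a * π = p := by
      rw [hπ, Ideal.mem_span_singleton'] at hpP
      exact hpP
    have hucoe : (u : (integralClosure ℤ_[2] K) ⧸ P ^ 4) = mk (1 + a * π) := by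
      rw [map_add, map_one, ha, hpeq]
      ring
    apply Units.ext
    rw [Units.val_pow_eq_pow_val, hucoe, ← map_pow, Units.val_one, hmk_one]
    exact part1 a
  -- the square roots of one
  have hsq2 : (hunit (π ^ 2) hπ2P).unit ^ 2 = 1 := by
    apply Units.ext
    rw [Units.val_pow_eq_pow_val, IsUnit.unit_spec, ← map_pow, Units.val_one, hmk_one]
    have : (1 + π ^ 2) ^ 2 - 1 = 2 * π ^ 2 + π ^ 4 := by ring
    rw [this]
    exact add_mem h2π2 hπ4
  have hsq3 : (hunit (π ^ 3) hπ3P).unit ^ 2 = 1 := by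
    apply Units.ext
    rw [Units.val_pow_eq_pow_val, IsUnit.unit_spec, ← map_pow, Units.val_one, hmk_one]
    have : (1 + π ^ 3) ^ 2 - 1 = (2 * π ^ 2) * π + π ^ 4 * π ^ 2 := by ring
    rw [this]
    exact add_mem (Ideal.mul_mem_right _ _ h2π2) (Ideal.mul_mem_right _ _ hπ4)
  have hne2 : (hunit (π ^ 2) hπ2P).unit ≠ 1 := by
    intro h
    have := congrArg (Units.val) h
    rw [IsUnit.unit_spec, Units.val_one, hmk_one] at this
    apply hπ2'
    have h' : π ^ 2 = (1 + π ^ 2) - 1 := by ring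
    rw [h']
    exact this
  have hne3 : (hunit (π ^ 3) hπ3P).unit ≠ 1 := by
    intro h
    have := congrArg (Units.val) h
    rw [IsUnit.unit_spec, Units.val_one, hmk_one] at this
    apply hπ3
    have h' : π ^ 3 = (1 + π ^ 3) - 1 := by ring
    rw [h']
    exact this
  have hne23 : (hunit (π ^ 2) hπ2P).unit ≠ (hunit (π ^ 3) hπ3P).unit := by
    intro h
    have := congrArg (Units.val) h
    rw [IsUnit.unit_spec, IsUnit.unit_spec, Ideal.Quotient.eq] at this
    apply hw23
    have h' : π ^ 2 - π ^ 3 = (1 + π ^ 2) - (1 + π ^ 3) := by ring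
    rw [h']
    exact this
  by_cases hsq : u ^ 2 = 1
  · -- then 1 + π would satisfy (1+π)^2 = 1 in the quotient, contradiction
    have hmem := hu2 _ (humem π hπP)
    obtain ⟨m, hm⟩ := hmem
    have hm' : u ^ m = (hunit π hπP).unit := hm
    have hpow : ((hunit π hπP).unit) ^ 2 = 1 := by
      rw [← hm']
      have h1 : (u ^ m) ^ (2 : ℕ) = u ^ (m * 2) := by
        rw [zpow_mul]
        norm_cast
      rw [h1, mul_comm, zpow_mul]
      norm_cast
      rw [hsq]
      simp
    have := congrArg (Units.val) hpow
    rw [Units.val_pow_eq_pow_val, IsUnit.unit_spec, ← map_pow, Units.val_one, hmk_one] at this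
    apply hw1
    have h' : (2 : integralClosure ℤ_[2] K) * π + π ^ 2 = (1 + π) ^ 2 - 1 := by ring
    rw [h']
    exact this
  · have e2 : (hunit (π ^ 2) hπ2P).unit = u ^ 2 :=
      aux_sqrt_one hu4 hsq (hu2 _ (humem _ hπ2P)) hsq2 hne2
    have e3 : (hunit (π ^ 3) hπ3P).unit = u ^ 2 :=
      aux_sqrt_one hu4 hsq (hu2 _ (humem _ hπ3P)) hsq3 hne3
    exact hne23 (e2.trans e3.symm)
end

section
/- Let K be a finite extension of Q₂ with ring of integers O, maximal ideal P, ramification index e and residual degree f. If f = 1 and e = 1 (i.e., K = Q₂), then for n > 2 the group (O/P^n)^× has more than one element of order 2; if f = 1, e > 1, then for n > 3 the group (O/P^n)^× has more than one element of order 2. -/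
set_option synthInstance.maxHeartbeats 1000000
set_option maxHeartbeats 1000000

/-- Build two distinct nontrivial square roots of 1 in the unit group from ring elements. -/
lemma two_orderTwo_units_of {R : Type*} [CommRing R] (x y : R)
    (hx : x * x = 1) (hy : y * y = 1) (hx1 : x ≠ 1) (hy1 : y ≠ 1) (hxy : x ≠ y) :
    ∃ u v : Rˣ, u ≠ v ∧ (u ≠ 1 ∧ u ^ 2 = 1) ∧ (v ≠ 1 ∧ v ^ 2 = 1) := by
  refine ⟨⟨x, x, hx, hx⟩, ⟨y, y, hy, hy⟩, ?_, ⟨?_, ?_⟩, ⟨?_, ?_⟩⟩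
  · exact fun h => hxy (congrArg Units.val h)
  · exact fun h => hx1 (congrArg Units.val h)
  · exact Units.ext (by simp [pow_two, hx])
  · exact fun h => hy1 (congrArg Units.val h)
  · exact Units.ext (by simp [pow_two, hy])

/-- For `K` a finite extension of `ℚ₂` with ring of integers `O`, maximal ideal `P`,
ramification index `e` and residual degree `f`: if `f = 1` and `e = 1` then for `n > 2`
the group `(O/Pⁿ)ˣ` has more than one element of order 2; if `f = 1` and `e > 1` then
the same holds for `n > 3`. -/
theorem local_units_many_orderTwo
    (K : Type*) [Field K] [Algebra ℚ_[2] K] [FiniteDimensional ℚ_[2] K]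
    [Algebra ℤ_[2] K] [IsScalarTower ℤ_[2] ℚ_[2] K]
    (P : Ideal (integralClosure ℤ_[2] K)) (hPmax : P.IsMaximal)
    (hPuniq : ∀ Q : Ideal (integralClosure ℤ_[2] K), Q.IsMaximal → Q = P) :
    (Ideal.inertiaDeg'
        (IsLocalRing.maximalIdeal ℤ_[2]) P = 1 →
      Ideal.ramificationIdx'
        (IsLocalRing.maximalIdeal ℤ_[2]) P = 1 →
      ∀ n : ℕ, 2 < n →
        ∃ u v : ((integralClosure ℤ_[2] K) ⧸ P ^ n)ˣ,
          u ≠ v ∧ (u ≠ 1 ∧ u ^ 2 = 1) ∧ (v ≠ 1 ∧ v ^ 2 = 1)) ∧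
    (Ideal.inertiaDeg'
        (IsLocalRing.maximalIdeal ℤ_[2]) P = 1 →
      1 < Ideal.ramificationIdx'
        (IsLocalRing.maximalIdeal ℤ_[2]) P →
      ∀ n : ℕ, 3 < n →
        ∃ u v : ((integralClosure ℤ_[2] K) ⧸ P ^ n)ˣ,
          u ≠ v ∧ (u ≠ 1 ∧ u ^ 2 = 1) ∧ (v ≠ 1 ∧ v ^ 2 = 1)) := by
  -- `O` is a local ring with maximal ideal `P`
  haveI : IsLocalRing (integralClosure ℤ_[2] K) := IsLocalRing.of_unique_max_ideal ⟨P, hPmax, fun I hI => hPuniq I hI⟩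
  -- `O` is a Dedekind domain
  haveI : IsDedekindDomain (integralClosure ℤ_[2] K) := integralClosure.isDedekindDomain ℤ_[2] ℚ_[2] K
  -- `O` is not a field
  have hinjK : Function.Injective (algebraMap ℤ_[2] K) := by
    rw [IsScalarTower.algebraMap_eq ℤ_[2] ℚ_[2] K]
    exact (algebraMap ℚ_[2] K).injective.comp (IsFractionRing.injective ℤ_[2] ℚ_[2])
  have hinjX : Function.Injective (algebraMap ℤ_[2] (integralClosure ℤ_[2] K)) := by
    intro a b hab
    apply hinjK
    rw [IsScalarTower.algebraMap_apply ℤ_[2] (integralClosure ℤ_[2] K) K, IsScalarTower.algebraMap_apply ℤ_[2] (integralClosure ℤ_[2] K) K, hab]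
  have hinj := hinjX
  haveI hOC : CharZero (integralClosure ℤ_[2] K) := charZero_of_injective_algebraMap hinj
  have hnf : ¬ IsField (integralClosure ℤ_[2] K) := by
    intro hF
    exact IsDiscreteValuationRing.not_isField (R := ℤ_[2])
      ((Algebra.IsIntegral.isField_iff_isField hinj).mpr hF)
  -- `O` is a DVR
  haveI : IsDiscreteValuationRing (integralClosure ℤ_[2] K) := ((IsDiscreteValuationRing.TFAE ↥(integralClosure ℤ_[2] K) hnf).out 0 2).mpr (inferInstance : IsDedekindDomain ↥(integralClosure ℤ_[2] K))
  obtain ⟨π, hπ⟩ := IsDiscreteValuationRing.exists_irreducible ↥(integralClosure ℤ_[2] K)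
  have hPspan : P = Ideal.span {π} :=
    (IsLocalRing.eq_maximalIdeal hPmax).trans
      ((IsDiscreteValuationRing.irreducible_iff_uniformizer π).mp hπ)
  have h2ne : (2 : (integralClosure ℤ_[2] K)) ≠ 0 := two_ne_zero
  obtain ⟨v, u2, h2⟩ := IsDiscreteValuationRing.eq_unit_mul_pow_irreducible h2ne hπ
  -- the ramification index equals the valuation of 2
  have hmap : Ideal.map (algebraMap ℤ_[2] (integralClosure ℤ_[2] K)) (IsLocalRing.maximalIdeal ℤ_[2])
      = Ideal.span {(2 : (integralClosure ℤ_[2] K))} := by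
    rw [PadicInt.maximalIdeal_eq_span_p, Ideal.map_span, Set.image_singleton, map_natCast, Nat.cast_ofNat]
  have he : Ideal.ramificationIdx' (IsLocalRing.maximalIdeal ℤ_[2]) P = v := by
    apply Ideal.ramificationIdx'_spec
    · rw [hmap, hPspan, Ideal.span_singleton_pow, Ideal.span_singleton_le_span_singleton]
      exact ⟨u2, by rw [h2]; ring⟩
    · rw [hmap, hPspan, Ideal.span_singleton_pow, Ideal.span_singleton_le_span_singleton, h2,
        Units.dvd_mul_left, pow_dvd_pow_iff hπ.ne_zero hπ.not_isUnit]
      omega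
  -- helper: non-divisibility
  have hnd : ∀ (N k : ℕ) (c : (integralClosure ℤ_[2] K)), IsUnit c → k < N → ¬ π ^ N ∣ π ^ k * c := by
    intro N k c hc hkN hdvd
    rw [hc.dvd_mul_right, pow_dvd_pow_iff hπ.ne_zero hπ.not_isUnit] at hdvd
    omega
  -- helper: quotient equality
  have key : ∀ (N : ℕ) (a b : (integralClosure ℤ_[2] K)),
      Ideal.Quotient.mk (P ^ N) a = Ideal.Quotient.mk (P ^ N) b ↔ π ^ N ∣ a - b := by
    intro N a b
    rw [Ideal.Quotient.eq, hPspan, Ideal.span_singleton_pow, Ideal.mem_span_singleton]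
  have humem : ∀ k : ℕ, 0 < k → IsUnit ((u2 : (integralClosure ℤ_[2] K)) + π ^ k) := by
    intro k hk
    by_contra h
    have h1 : (u2 : (integralClosure ℤ_[2] K)) + π ^ k ∈ IsLocalRing.maximalIdeal (integralClosure ℤ_[2] K) := h
    have h2' : π ^ k ∈ IsLocalRing.maximalIdeal (integralClosure ℤ_[2] K) := by
      rw [← IsLocalRing.eq_maximalIdeal hPmax, hPspan, Ideal.mem_span_singleton]
      exact dvd_pow_self π hk.ne'
    have : (u2 : (integralClosure ℤ_[2] K)) ∈ IsLocalRing.maximalIdeal (integralClosure ℤ_[2] K) := by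
      have := Ideal.sub_mem _ h1 h2'
      simpa using this
    exact this u2.isUnit
  constructor
  · -- unramified case: e = 1
    intro _ he1 n hn
    have hv : v = 1 := by omega
    subst hv
    obtain ⟨m, rfl⟩ : ∃ m, n = m + 3 := ⟨n - 3, by omega⟩
    apply two_orderTwo_units_of (Ideal.Quotient.mk (P ^ (m + 3)) (1 + π ^ (m + 2)))
      (Ideal.Quotient.mk (P ^ (m + 3)) (-1))
    · rw [← map_mul, (map_one (Ideal.Quotient.mk (P ^ (m + 3)))).symm,
        key]
      exact ⟨(u2 : (integralClosure ℤ_[2] K)) + π ^ (m + 1), by rw [pow_one] at h2; linear_combination (π ^ (m + 2)) * h2⟩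
    · rw [← map_mul, (map_one (Ideal.Quotient.mk (P ^ (m + 3)))).symm,
        key]
      exact ⟨0, by ring⟩
    · rw [(map_one (Ideal.Quotient.mk (P ^ (m + 3)))).symm, ne_eq, key]
      have : (1 + π ^ (m + 2)) - 1 = π ^ (m + 2) * 1 := by ring
      rw [this]
      exact hnd _ _ _ isUnit_one (by omega)
    · rw [(map_one (Ideal.Quotient.mk (P ^ (m + 3)))).symm, ne_eq, key]
      have : (-1 : (integralClosure ℤ_[2] K)) - 1 = π ^ 1 * (-(u2 : (integralClosure ℤ_[2] K))) := by
        rw [pow_one] at h2 ⊢; linear_combination -h2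
      rw [this]
      exact hnd _ _ _ u2.isUnit.neg (by omega)
    · rw [ne_eq, key]
      have : (1 + π ^ (m + 2)) - (-1) = π ^ 1 * ((u2 : (integralClosure ℤ_[2] K)) + π ^ (m + 1)) := by
        rw [pow_one] at h2 ⊢; linear_combination h2
      rw [this]
      exact hnd _ _ _ (humem (m + 1) (by omega)) (by omega)
  · -- ramified case: e ≥ 2
    intro _ he2 n hn
    have hv : 2 ≤ v := by omega
    obtain ⟨w, rfl⟩ : ∃ w, v = w + 2 := ⟨v - 2, by omega⟩
    obtain ⟨m, rfl⟩ : ∃ m, n = m + 4 := ⟨n - 4, by omega⟩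
    apply two_orderTwo_units_of (Ideal.Quotient.mk (P ^ (m + 4)) (1 + π ^ (m + 2)))
      (Ideal.Quotient.mk (P ^ (m + 4)) (1 + π ^ (m + 3)))
    · rw [← map_mul, (map_one (Ideal.Quotient.mk (P ^ (m + 4)))).symm,
        key]
      exact ⟨π ^ m + (u2 : (integralClosure ℤ_[2] K)) * π ^ w, by linear_combination (π ^ (m + 2)) * h2⟩
    · rw [← map_mul, (map_one (Ideal.Quotient.mk (P ^ (m + 4)))).symm,
        key]
      exact ⟨π ^ (m + 2) + (u2 : (integralClosure ℤ_[2] K)) * π ^ (w + 1), by linear_combination (π ^ (m + 3)) * h2⟩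
    · rw [(map_one (Ideal.Quotient.mk (P ^ (m + 4)))).symm, ne_eq, key]
      have : (1 + π ^ (m + 2)) - 1 = π ^ (m + 2) * 1 := by ring
      rw [this]
      exact hnd _ _ _ isUnit_one (by omega)
    · rw [(map_one (Ideal.Quotient.mk (P ^ (m + 4)))).symm, ne_eq, key]
      have : (1 + π ^ (m + 3)) - 1 = π ^ (m + 3) * 1 := by ring
      rw [this]
      exact hnd _ _ _ isUnit_one (by omega)
    · rw [ne_eq, key]
      have : (1 + π ^ (m + 2)) - (1 + π ^ (m + 3)) = π ^ (m + 2) * (1 - π) := by ring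
      rw [this]
      exact hnd _ _ _
        (IsLocalRing.isUnit_one_sub_self_of_mem_nonunits π hπ.not_isUnit) (by omega)
end

section
/- Let O be the ring of integers of a number field and a ⊂ O a nonzero ideal with prime factorization a = ∏ p^{m_p}. If a has exactly one odd prime divisor p₀ and v_p(a) < 2 for every even prime ideal p dividing a, then the product of all elements of (O/a)^× equals -1. -/
set_option synthInstance.maxHeartbeats 1000000
set_option maxHeartbeats 1000000

section Aux

variable {R : Type*} [CommRing R] [IsDedekindDomain R]

/-- If every prime factor of `A` divides both `I` and `J` and occurs in `A` with
multiplicity one, then `A` divides `I` and `J`. -/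
lemma aux_dvd_of_squarefree (I J : Ideal R) :
    ∀ A : Ideal R, A ≠ 0 →
      (∀ q : Ideal R, Prime q → q ∣ A → (q ∣ I ∧ q ∣ J ∧ ¬ q * q ∣ A)) →
      A ∣ I ∧ A ∣ J := by
  intro A
  induction A using WfDvdMonoid.induction_on_irreducible with
  | zero => intro h; exact absurd rfl h
  | unit u hu => intro _ _; exact ⟨hu.dvd, hu.dvd⟩
  | mul b p hb hp ih =>
    intro _ H
    have hpp : Prime p := UniqueFactorizationMonoid.irreducible_iff_prime.mp hp
    obtain ⟨hpI, hpJ, hsq⟩ := H p hpp (dvd_mul_right p b)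
    have Hb : ∀ q : Ideal R, Prime q → q ∣ b → (q ∣ I ∧ q ∣ J ∧ ¬ q * q ∣ b) := by
      intro q hq hqb
      obtain ⟨h1, h2, h3⟩ := H q hq (hqb.mul_left p)
      exact ⟨h1, h2, fun hc => h3 (hc.mul_left p)⟩
    obtain ⟨hbI, hbJ⟩ := ih hb Hb
    have hpb : ¬ p ∣ b := by
      intro h
      exact hsq (mul_dvd_mul (dvd_refl p) h)
    constructor
    · obtain ⟨c, rfl⟩ := hbI
      obtain ⟨d, rfl⟩ := (hpp.dvd_mul.mp hpI).resolve_left hpb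
      exact ⟨d, by ring⟩
    · obtain ⟨c, rfl⟩ := hbJ
      obtain ⟨d, rfl⟩ := (hpp.dvd_mul.mp hpJ).resolve_left hpb
      exact ⟨d, by ring⟩

lemma key_pm_one (a : Ideal R) (ha : a ≠ ⊥)
    (hodd : ∃! p : Ideal R, p.IsPrime ∧ p ∣ a ∧ (2 : R) ∉ p)
    (heven : ∀ p : Ideal R, p.IsPrime → p ∣ a → (2 : R) ∈ p → ¬ p ^ 2 ∣ a)
    (x : R) (hx : x * x - 1 ∈ a) : x - 1 ∈ a ∨ x + 1 ∈ a := by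
  obtain ⟨p₀, ⟨hp₀prime, hp₀a, hp₀2⟩, huniq⟩ := hodd
  have ha0 : a ≠ 0 := by simpa using ha
  have hp₀ne : p₀ ≠ ⊥ := by
    rintro rfl
    exact ha0 (zero_dvd_iff.mp (by rw [Ideal.zero_eq_bot]; exact hp₀a))
  have hP : Prime p₀ := Ideal.prime_of_isPrime hp₀ne hp₀prime
  set I := Ideal.span {x - 1} with hI
  set J := Ideal.span {x + 1} with hJ
  have hmemI : ∀ q : Ideal R, q ∣ I ↔ x - 1 ∈ q := by
    intro q
    rw [hI, Ideal.dvd_iff_le, Ideal.span_singleton_le_iff_mem]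
  have hmemJ : ∀ q : Ideal R, q ∣ J ↔ x + 1 ∈ q := by
    intro q
    rw [hJ, Ideal.dvd_iff_le, Ideal.span_singleton_le_iff_mem]
  have haIJ : a ∣ I * J := by
    rw [hI, hJ, Ideal.span_singleton_mul_span_singleton, Ideal.dvd_iff_le,
      Ideal.span_singleton_le_iff_mem]
    have : (x - 1) * (x + 1) = x * x - 1 := by ring
    rw [this]; exact hx
  -- the multiplicity of p₀ in a
  have hfin : FiniteMultiplicity p₀ a := FiniteMultiplicity.of_prime_left hP ha0
  set N := multiplicity p₀ a with hN
  have h1 : p₀ ^ N ∣ a := pow_multiplicity_dvd p₀ a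
  have h2 : ¬ p₀ ^ (N + 1) ∣ a :=
    hfin.not_pow_dvd_of_multiplicity_lt (Nat.lt_succ_self N)
  obtain ⟨b, hab⟩ := h1
  have hpb : ¬ p₀ ∣ b := by
    rintro ⟨c, rfl⟩
    exact h2 ⟨c, by rw [hab]; ring⟩
  have hbne : b ≠ 0 := by
    rintro rfl
    exact ha0 (by simpa using hab)
  have hba : b ∣ a := ⟨p₀ ^ N, by rw [hab]; ring⟩
  have Hb : ∀ q : Ideal R, Prime q → q ∣ b → (q ∣ I ∧ q ∣ J ∧ ¬ q * q ∣ b) := by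
    intro q hq hqb
    have hqa : q ∣ a := hqb.trans hba
    have hq2 : (2 : R) ∈ q := by
      by_contra h2q
      exact hpb ((huniq q ⟨Ideal.isPrime_of_prime hq, hqa, h2q⟩) ▸ hqb)
    have hqIJ : q ∣ I * J := hqa.trans haIJ
    have hqI : q ∣ I ∧ q ∣ J := by
      rcases hq.dvd_mul.mp hqIJ with h | h
      · refine ⟨h, ?_⟩
        rw [hmemJ]
        rw [hmemI] at h
        have : x + 1 = (x - 1) + 2 := by ring
        rw [this]
        exact add_mem h hq2
      · refine ⟨?_, h⟩
        rw [hmemI]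
        rw [hmemJ] at h
        have : x - 1 = (x + 1) - 2 := by ring
        rw [this]
        exact sub_mem h hq2
    refine ⟨hqI.1, hqI.2, fun hc => ?_⟩
    exact heven q (Ideal.isPrime_of_prime hq) hqa hq2 (by rw [pow_two]; exact hc.trans hba)
  obtain ⟨hbI, hbJ⟩ := aux_dvd_of_squarefree I J b hbne Hb
  have hNdvd : p₀ ^ N ∣ I * J := (Dvd.intro b hab.symm).trans haIJ
  have hcombine : ∀ T : Ideal R, b ∣ T → p₀ ^ N ∣ T → a ∣ T := by
    rintro T ⟨c, rfl⟩ hNT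
    have hc : p₀ ^ N ∣ c := hP.pow_dvd_of_dvd_mul_left N hpb hNT
    obtain ⟨d, rfl⟩ := hc
    exact ⟨d, by rw [hab]; ring⟩
  have hnotboth : ¬ (p₀ ∣ I ∧ p₀ ∣ J) := by
    rintro ⟨hpI, hpJ⟩
    rw [hmemI] at hpI
    rw [hmemJ] at hpJ
    have : (2 : R) = (x + 1) - (x - 1) := by ring
    exact hp₀2 (this ▸ sub_mem hpJ hpI)
  by_cases hpJdvd : p₀ ∣ J
  · -- then p₀ does not divide I, so p₀ ^ N divides J, so a ∣ J
    have hpI : ¬ p₀ ∣ I := fun h => hnotboth ⟨h, hpJdvd⟩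
    rw [hmemI] at hpI
    have hNJ : p₀ ^ N ∣ J := by
      apply hP.pow_dvd_of_dvd_mul_left N _ hNdvd
      rwa [hmemI]
    right
    have := hcombine J hbJ hNJ
    rw [Ideal.dvd_iff_le, hJ, Ideal.span_singleton_le_iff_mem] at this
    exact this
  · have hNI : p₀ ^ N ∣ I := by
      apply hP.pow_dvd_of_dvd_mul_right N _ hNdvd
      exact hpJdvd
    left
    have := hcombine I hbI hNI
    rw [Ideal.dvd_iff_le, hI, Ideal.span_singleton_le_iff_mem] at this
    exact this

end Aux

/-- Let `O` be the ring of integers of a number field and `a` a nonzero ideal of `O`.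
If `a` has exactly one odd prime divisor, and `v_p(a) < 2` for every even prime
divisor `p` of `a`, then the product of all elements of `(O/a)ˣ` is `-1`. -/
theorem prod_units_quotient_eq_neg_one
    (K : Type*) [Field K] [NumberField K]
    (a : Ideal (NumberField.RingOfIntegers K)) (ha : a ≠ ⊥)
    (hodd : ∃! p : Ideal (NumberField.RingOfIntegers K),
      p.IsPrime ∧ p ∣ a ∧ (2 : NumberField.RingOfIntegers K) ∉ p)
    (heven : ∀ p : Ideal (NumberField.RingOfIntegers K),
      p.IsPrime → p ∣ a → (2 : NumberField.RingOfIntegers K) ∈ p → ¬ p ^ 2 ∣ a) :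
    letI := @Fintype.ofFinite _ (Ideal.finiteQuotientOfFreeOfNeBot a ha)
    letI := Fintype.ofFinite (NumberField.RingOfIntegers K ⧸ a)ˣ
    (∏ u : (NumberField.RingOfIntegers K ⧸ a)ˣ, u) = -1 := by
  letI := @Fintype.ofFinite _ (Ideal.finiteQuotientOfFreeOfNeBot a ha)
  letI := Fintype.ofFinite (NumberField.RingOfIntegers K ⧸ a)ˣ
  show (∏ u : (NumberField.RingOfIntegers K ⧸ a)ˣ, u) = -1
  classical
  -- `-1 ≠ 1` in the quotient
  obtain ⟨p₀, ⟨hp₀prime, hp₀a, hp₀2⟩, _⟩ := hodd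
  have htwo : (2 : NumberField.RingOfIntegers K) ∉ a := fun h => hp₀2 (Ideal.le_of_dvd hp₀a h)
  have hne' : (-1 : NumberField.RingOfIntegers K ⧸ a) ≠ 1 := by
    intro h
    apply htwo
    apply Ideal.Quotient.eq_zero_iff_mem.mp
    have h2 : (Ideal.Quotient.mk a) (2 : NumberField.RingOfIntegers K) = 1 - (-1) := by
      rw [show (2 : NumberField.RingOfIntegers K) = 1 - (-1) by ring, map_sub, map_one, map_neg,
        map_one]
    rw [h2, h, sub_self]
  have hneu : (-1 : (NumberField.RingOfIntegers K ⧸ a)ˣ) ≠ 1 := by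
    intro h
    apply hne'
    have := congrArg (Units.val) h
    simpa using this
  -- solutions of `g * g = 1` are `1` and `-1`
  have hsolve : ∀ g : (NumberField.RingOfIntegers K ⧸ a)ˣ, g * g = 1 → g = 1 ∨ g = -1 := by
    intro g hg
    obtain ⟨x, hxx⟩ := Ideal.Quotient.mk_surjective (g : NumberField.RingOfIntegers K ⧸ a)
    have hmem : x * x - 1 ∈ a := by
      apply Ideal.Quotient.eq_zero_iff_mem.mp
      have hval : ((g : NumberField.RingOfIntegers K ⧸ a)) * ((g : NumberField.RingOfIntegers K ⧸ a)) = 1 := by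
        rw [← Units.val_mul, hg, Units.val_one]
      rw [map_sub, map_mul, hxx, hval, map_one, sub_self]
    rcases key_pm_one a ha ⟨p₀, ⟨hp₀prime, hp₀a, hp₀2⟩, ‹_›⟩ heven x hmem with h | h
    · left
      apply Units.ext
      rw [Units.val_one, ← hxx]
      have : (Ideal.Quotient.mk a) x = (Ideal.Quotient.mk a) 1 := Ideal.Quotient.eq.mpr h
      simpa using this
    · right
      apply Units.ext
      rw [Units.val_neg, Units.val_one, ← hxx]
      have : (Ideal.Quotient.mk a) x = (Ideal.Quotient.mk a) (-1) :=
        Ideal.Quotient.eq.mpr (by simpa [sub_neg_eq_add] using h)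
      simpa using this
  -- the product over non-self-inverse elements is 1
  have hT : (∏ g ∈ Finset.univ.filter (fun g : (NumberField.RingOfIntegers K ⧸ a)ˣ => ¬ g⁻¹ = g), g) = 1 := by
    refine Finset.prod_involution (fun g _ => g⁻¹) (fun g _ => mul_inv_cancel g)
      (fun g hg _ => (Finset.mem_filter.mp hg).2) (fun g hg => ?_) (fun g _ => inv_inv g)
    simp only [Finset.mem_filter, Finset.mem_univ, true_and, inv_inv] at hg ⊢
    exact fun h => hg h.symm
  have hS : Finset.univ.filter (fun g : (NumberField.RingOfIntegers K ⧸ a)ˣ => g⁻¹ = g) = {1, -1} := by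
    ext g
    simp only [Finset.mem_filter, Finset.mem_univ, true_and, Finset.mem_insert,
      Finset.mem_singleton]
    constructor
    · intro h
      exact hsolve g (by rw [← inv_eq_iff_mul_eq_one] at *; exact h)
    · rintro (rfl | rfl) <;> simp
  have hsplit := Finset.prod_filter_mul_prod_filter_not Finset.univ
    (fun g : (NumberField.RingOfIntegers K ⧸ a)ˣ => g⁻¹ = g) (fun g => g)
  rw [hT, mul_one, hS] at hsplit
  rw [← hsplit]
  rw [Finset.prod_pair (Ne.symm hneu)]
  simp
end

section
/- Let t > 1, ζ a primitive 2^t-th root of unity, O = Z[ζ], and p the unique even prime ideal of O, with π = 1 - ζ. Then the product of all elements of (O/p^n)^× equals 1 for n = 1, equals 1 + π̄ for n = 2, equals 1 + π̄² for n = 3, and equals 1 for n > 3. -/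
open Finset in
lemma aux_prod_invol {G : Type*} [CommGroup G] [Fintype G]
    (a b : G) (ha : a * a = 1) (hb : b * b = 1) (ha1 : a ≠ 1) (hb1 : b ≠ 1) (hab : a ≠ b) :
    ∏ g : G, g = 1 := by
  classical
  set T : Subgroup G :=
    { carrier := {g | g * g = 1}
      one_mem' := by simp
      mul_mem' := by
        intro x y hx hy
        simp only [Set.mem_setOf_eq] at *
        calc x * y * (x * y) = (x * x) * (y * y) := by
              rw [mul_assoc, mul_assoc, mul_comm y (x * y), mul_assoc]
        _ = 1 := by rw [hx, hy, one_mul]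
      inv_mem' := by
        intro x hx
        simp only [Set.mem_setOf_eq] at *
        rw [← mul_inv_rev, hx, inv_one] } with hT
  have memT : ∀ g : G, g ∈ T ↔ g * g = 1 := fun g => Iff.rfl
  have hsplit : ∏ g : G, g = ∏ h : T, (h : G) := by
    have h1 : (Finset.univ : Finset G) =
        Finset.univ.filter (fun g => g ∈ T) ∪ Finset.univ.filter (fun g => g ∉ T) := by
      ext g; simp [em]
    have h2 : ∏ g ∈ Finset.univ.filter (fun g : G => g ∉ T), g = 1 := by
      refine Finset.prod_involution (fun g _ => g⁻¹) (fun g _ => by simpa using mul_inv_cancel g)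
        ?_ ?_ (fun g _ => inv_inv g)
      · intro g hg hne h
        have h' : g⁻¹ = g := h
        simp only [Finset.mem_filter] at hg
        exact hg.2 ((memT g).2 (by nth_rewrite 2 [← h']; exact mul_inv_cancel g))
      · intro g hg
        show g⁻¹ ∈ Finset.filter (fun g : G => g ∉ T) Finset.univ
        simp only [Finset.mem_filter, Finset.mem_univ, true_and] at hg ⊢
        intro hmem
        apply hg
        rw [memT] at hmem ⊢
        have := congrArg (fun x : G => x⁻¹) hmem
        simpa using this
    rw [h1, Finset.prod_union (by simp [Finset.disjoint_filter]), h2, mul_one]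
    rw [← Finset.prod_subtype (Finset.univ.filter (fun g : G => g ∈ T))
      (p := fun g => g ∈ T) (by simp) (fun g => (g : G))]
  have hco : ∏ h : T, (h : G) = ((∏ h : T, h : T) : G) :=
    (map_prod T.subtype (fun h => h) Finset.univ).symm
  have hTsq : ∀ h : T, h * h = 1 := by
    intro h
    have h2 : (h : G) * h = 1 := h.2
    exact Subtype.ext h2
  have key : ∀ c : T, c ≠ 1 → (∏ h : T, h) = 1 ∨ (∏ h : T, h) = c := by
    intro c hc
    set A := Subgroup.zpowers c with hA
    set μ := QuotientGroup.mk' A with hμ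
    have hprod : ∏ h : T, μ h = 1 := by
      refine Finset.prod_involution (fun h _ => c * h) ?_ ?_ (fun h _ => Finset.mem_univ _) ?_
      · intro h _
        have hstep : h * (c * h) = c := by
          rw [mul_comm c h, ← mul_assoc, hTsq h, one_mul]
        rw [← map_mul, hstep]
        simp only [hμ, QuotientGroup.mk'_apply, QuotientGroup.eq_one_iff]
        exact Subgroup.mem_zpowers c
      · intro h _ _ hch
        exact hc (by
          have := congrArg (fun x : T => x * h⁻¹) hch
          simpa using this)
      · intro h _
        show c * (c * h) = h
        rw [← mul_assoc, hTsq c, one_mul]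
    rw [← map_prod] at hprod
    have hmem : (∏ h : T, h) ∈ A := by
      rwa [← QuotientGroup.ker_mk' A, MonoidHom.mem_ker]
    obtain ⟨k, hk⟩ := hmem
    have hk' : c ^ k = ∏ h : T, h := hk
    have hc2 : c ^ (2:ℤ) = 1 := by
      rw [zpow_two, hTsq c]
    rcases Int.even_or_odd k with ⟨m, hm⟩ | ⟨m, hm⟩
    · left; rw [← hk', hm, ← two_mul, zpow_mul, hc2, one_zpow]
    · right; rw [← hk', hm, zpow_add, zpow_mul, zpow_one, hc2, one_zpow, one_mul]
  have haT : (⟨a, ha⟩ : T) ≠ 1 := fun h => ha1 (congrArg Subtype.val h)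
  have hbT : (⟨b, hb⟩ : T) ≠ 1 := fun h => hb1 (congrArg Subtype.val h)
  rcases key ⟨a, ha⟩ haT with h | h
  · rw [hsplit, hco, h]; rfl
  · rcases key ⟨b, hb⟩ hbT with h' | h'
    · rw [hsplit, hco, h']; rfl
    · exact absurd (congrArg Subtype.val (h.symm.trans h')) hab


section Aux

variable {R : Type*} [CommRing R]

lemma aux_digits (π : R) (hdig : ∀ y : R, π ∣ y ∨ π ∣ (y - 1)) :
    ∀ (n : ℕ) (x : R), ∃ c : ℕ → R, (∀ i, c i = 0 ∨ c i = 1) ∧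
      π ^ n ∣ (x - ∑ i ∈ Finset.range n, c i * π ^ i) := by
  intro n
  induction n with
  | zero => intro x; exact ⟨fun _ => 0, fun _ => Or.inl rfl, by simp⟩
  | succ n ih =>
    intro x
    obtain ⟨c, hc, y, hy⟩ := ih x
    have hm : ∃ m : R, (m = 0 ∨ m = 1) ∧ π ∣ (y - m) := by
      rcases hdig y with h | h
      · exact ⟨0, Or.inl rfl, by simpa using h⟩
      · exact ⟨1, Or.inr rfl, h⟩
    obtain ⟨m, hm01, w, hw⟩ := hm
    refine ⟨fun i => if i = n then m else c i, ?_, ⟨w, ?_⟩⟩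
    · intro i
      by_cases h : i = n
      · simp [h, hm01]
      · simp [h, hc i]
    · rw [Finset.sum_range_succ]
      have hs : ∑ i ∈ Finset.range n, (if i = n then m else c i) * π ^ i
          = ∑ i ∈ Finset.range n, c i * π ^ i := by
        refine Finset.sum_congr rfl ?_
        intro i hi
        rw [if_neg (Finset.mem_range.1 hi).ne]
      rw [hs]
      beta_reduce
      rw [if_pos rfl]
      linear_combination hy + π ^ n * hw

lemma aux_unit_rep (π : R) (hπu : ¬IsUnit π)
    (hdig : ∀ y : R, π ∣ y ∨ π ∣ (y - 1)) (p : Ideal R) (hspan : p = Ideal.span {π})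
    (n : ℕ) (hn : 1 ≤ n) (u : (R ⧸ p ^ n)ˣ) :
    ∃ x : R, Ideal.Quotient.mk (p ^ n) x = ↑u ∧ π ∣ (x - 1) := by
  obtain ⟨x, hx⟩ := Ideal.Quotient.mk_surjective (↑u : R ⧸ p ^ n)
  obtain ⟨y, hy⟩ := Ideal.Quotient.mk_surjective (↑u⁻¹ : R ⧸ p ^ n)
  have hxy : π ^ n ∣ (x * y - 1) := by
    have h1 : Ideal.Quotient.mk (p ^ n) (x * y) = Ideal.Quotient.mk (p ^ n) 1 := by
      rw [map_mul, hx, hy, map_one]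
      exact u.mul_inv
    have h2 := Ideal.Quotient.eq.1 h1
    rwa [hspan, Ideal.span_singleton_pow, Ideal.mem_span_singleton] at h2
  have hπxy : π ∣ (x * y - 1) := dvd_trans (dvd_pow_self π (by omega)) hxy
  refine ⟨x, hx, ?_⟩
  rcases hdig x with hd | hd
  · exfalso
    refine hπu (isUnit_of_dvd_one ?_)
    have h1 : (1 : R) = x * y - (x * y - 1) := by ring
    rw [h1]
    exact dvd_sub (hd.mul_right y) hπxy
  · exact hd

lemma aux_mk_eq (π : R) (p : Ideal R) (hspan : p = Ideal.span {π}) (n : ℕ) (x y : R) :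
    Ideal.Quotient.mk (p ^ n) x = Ideal.Quotient.mk (p ^ n) y ↔ π ^ n ∣ (x - y) := by
  rw [Ideal.Quotient.eq, hspan, Ideal.span_singleton_pow, Ideal.mem_span_singleton]

lemma aux_ndvd (π : R) [IsDomain R] (hπ : Prime π) {j n : ℕ} (hjn : j < n) (w : R)
    (hw : ¬ π ∣ w) : ¬ (π ^ n ∣ π ^ j * w) := by
  intro h
  obtain ⟨c, hc⟩ := h
  have hj : π ^ j ≠ 0 := pow_ne_zero _ hπ.ne_zero
  have : w = π ^ (n - j) * c := by
    apply mul_left_cancel₀ hj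
    rw [hc, ← mul_assoc, ← pow_add, show j + (n - j) = n from by omega]
  apply hw
  rw [this]
  exact Dvd.dvd.mul_right (dvd_pow_self π (by omega)) c
end Aux

section N12
variable {R : Type*} [CommRing R]

lemma aux_hnd (π : R) [IsDomain R] (hπ : Prime π) {j n : ℕ} (h : j < n) :
    ¬ (π ^ n ∣ π ^ j) := by
  intro hdvd
  exact aux_ndvd π hπ h 1 (fun hu => hπ.not_unit (isUnit_of_dvd_one hu)) (by simpa using hdvd)

lemma aux_not_dvd_one_add (π : R) [IsDomain R] (hπ : Prime π) (c : R) : ¬ π ∣ (1 + π * c) := by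
  intro h
  have : π ∣ 1 := (dvd_add_right (Dvd.intro c rfl)).1 (by rwa [add_comm] at h)
  exact hπ.not_unit (isUnit_of_dvd_one this)

lemma aux_n1 (π : R) (hπu : ¬IsUnit π)
    (hdig : ∀ y : R, π ∣ y ∨ π ∣ (y - 1)) (p : Ideal R) (hspan : p = Ideal.span {π})
    [instU : Fintype (R ⧸ p ^ 1)ˣ] :
    (∏ u : (R ⧸ p ^ 1)ˣ, u) = 1 := by
  apply Finset.prod_eq_one
  intro u _
  obtain ⟨x, hx, hd⟩ := aux_unit_rep π hπu hdig p hspan 1 le_rfl u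
  apply Units.ext
  rw [Units.val_one, ← hx, show (1 : R ⧸ p ^ 1) = Ideal.Quotient.mk (p ^ 1) 1 from (map_one _).symm,
    aux_mk_eq π p hspan]
  simpa using hd

lemma aux_n2 (π : R) [IsDomain R] (hπ : Prime π)
    (hdig : ∀ y : R, π ∣ y ∨ π ∣ (y - 1)) (hsq2 : π ^ 2 ∣ 2)
    (p : Ideal R) (hspan : p = Ideal.span {π})
    [instU : Fintype (R ⧸ p ^ 2)ˣ] :
    ((∏ u : (R ⧸ p ^ 2)ˣ, u) : R ⧸ p ^ 2) = 1 + Ideal.Quotient.mk (p ^ 2) π := by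
  classical
  have hval : (Ideal.Quotient.mk (p ^ 2)) (1 + π) * (Ideal.Quotient.mk (p ^ 2)) (1 - π) = 1 := by
    rw [← map_mul, show (1 + π) * (1 - π) = 1 - π ^ 2 by ring,
      show (1 : R ⧸ p ^ 2) = Ideal.Quotient.mk (p ^ 2) 1 from (map_one _).symm,
      aux_mk_eq π p hspan]
    have h : (1 - π ^ 2) - 1 = -(π ^ 2) := by ring
    rw [h]
    exact dvd_neg.2 dvd_rfl
  set g : (R ⧸ p ^ 2)ˣ := Units.mkOfMulEqOne _ _ hval with hg
  have hgval : (g : R ⧸ p ^ 2) = Ideal.Quotient.mk (p ^ 2) (1 + π) := rfl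
  have hg1 : g ≠ 1 := by
    intro h
    have : (g : R ⧸ p ^ 2) = 1 := by rw [h, Units.val_one]
    rw [hgval, show (1 : R ⧸ p ^ 2) = Ideal.Quotient.mk (p ^ 2) 1 from (map_one _).symm,
      aux_mk_eq π p hspan, show (1 + π) - 1 = π by ring] at this
    exact aux_hnd π hπ (j := 1) (n := 2) (by norm_num) (by simpa using this)
  have hclass : ∀ u : (R ⧸ p ^ 2)ˣ, u = 1 ∨ u = g := by
    intro u
    obtain ⟨x, hx, w, hw⟩ := aux_unit_rep π hπ.not_unit hdig p hspan 2 (by norm_num) u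
    obtain ⟨c, hc01, hcd⟩ := aux_digits π hdig 1 w
    have hv : π ∣ (w - c 0) := by simpa using hcd
    obtain ⟨v, hv⟩ := hv
    have hux : (u : R ⧸ p ^ 2) = Ideal.Quotient.mk (p ^ 2) (1 + c 0 * π) := by
      rw [← hx, aux_mk_eq π p hspan]
      exact ⟨v, by linear_combination hw + π * hv⟩
    rcases hc01 0 with h0 | h0
    · left
      apply Units.ext
      rw [Units.val_one, hux, h0]
      simp
    · right
      apply Units.ext
      rw [hux, h0, hgval]
      congr 1
      ring
  have huniv : (Finset.univ : Finset (R ⧸ p ^ 2)ˣ) = {1, g} := by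
    ext u
    simp only [Finset.mem_univ, true_iff, Finset.mem_insert, Finset.mem_singleton]
    exact hclass u
  rw [huniv, Finset.prod_insert (by simpa using hg1.symm), Finset.prod_singleton,
    Units.val_one, one_mul, hgval, map_add, map_one]
end N12


section N34
variable {R : Type*} [CommRing R]

lemma aux_n3 (π : R) [IsDomain R] (hπ : Prime π)
    (hdig : ∀ y : R, π ∣ y ∨ π ∣ (y - 1)) (hsq2 : π ^ 2 ∣ 2)
    (p : Ideal R) (hspan : p = Ideal.span {π})
    [instU : Fintype (R ⧸ p ^ 3)ˣ] :
    ((∏ u : (R ⧸ p ^ 3)ˣ, u) : R ⧸ p ^ 3) = 1 + Ideal.Quotient.mk (p ^ 3) (π ^ 2) := by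
  classical
  obtain ⟨d, hd⟩ := hsq2
  have hone : (1 : R ⧸ p ^ 3) = Ideal.Quotient.mk (p ^ 3) 1 := (map_one _).symm
  have hval : (Ideal.Quotient.mk (p ^ 3)) (1 + π) * (Ideal.Quotient.mk (p ^ 3)) (1 - π + π ^ 2)
      = 1 := by
    rw [← map_mul, hone, aux_mk_eq π p hspan]
    exact ⟨1, by ring⟩
  set g : (R ⧸ p ^ 3)ˣ := Units.mkOfMulEqOne _ _ hval with hg
  have hgval : (g : R ⧸ p ^ 3) = Ideal.Quotient.mk (p ^ 3) (1 + π) := rfl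
  have hg2val : ((g ^ 2 : (R ⧸ p ^ 3)ˣ) : R ⧸ p ^ 3) = Ideal.Quotient.mk (p ^ 3) (1 + π ^ 2) := by
    rw [Units.val_pow_eq_pow_val, hgval, ← map_pow, aux_mk_eq π p hspan]
    exact ⟨d, by linear_combination π * hd⟩
  have hg3val : ((g ^ 3 : (R ⧸ p ^ 3)ˣ) : R ⧸ p ^ 3)
      = Ideal.Quotient.mk (p ^ 3) (1 + π + π ^ 2) := by
    rw [Units.val_pow_eq_pow_val, hgval, ← map_pow, aux_mk_eq π p hspan]
    exact ⟨d + d * π + 1, by linear_combination (π + π ^ 2) * hd⟩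
  have hg4 : g ^ 4 = 1 := by
    apply Units.ext
    rw [Units.val_pow_eq_pow_val, hgval, ← map_pow, Units.val_one, hone, aux_mk_eq π p hspan]
    exact ⟨2 * d + 3 * d * π + 4 + π, by linear_combination (2 * π + 3 * π ^ 2) * hd⟩
  have hn1 : ¬ π ^ 3 ∣ π := by
    intro h; exact aux_hnd π hπ (j := 1) (n := 3) (by norm_num) (by simpa using h)
  have hn2 : ¬ π ^ 3 ∣ π ^ 2 := aux_hnd π hπ (by norm_num)
  have hw1 : ¬ π ∣ (1 + π) := by
    have := aux_not_dvd_one_add π hπ 1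
    rwa [mul_one] at this
  have hw2 : ¬ π ∣ (1 - π) := by
    have := aux_not_dvd_one_add π hπ (-1)
    have he : (1 : R) + π * (-1) = 1 - π := by ring
    rwa [he] at this
  have hn3 : ¬ π ^ 3 ∣ (π + π ^ 2) := by
    intro h
    refine aux_ndvd π hπ (j := 1) (n := 3) (by norm_num) (1 + π) hw1 ?_
    have he : π ^ 1 * (1 + π) = π + π ^ 2 := by ring
    rwa [he]
  have hn4 : ¬ π ^ 3 ∣ (π - π ^ 2) := by
    intro h
    refine aux_ndvd π hπ (j := 1) (n := 3) (by norm_num) (1 - π) hw2 ?_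
    have he : π ^ 1 * (1 - π) = π - π ^ 2 := by ring
    rwa [he]
  have hdiff : ∀ (u v : (R ⧸ p ^ 3)ˣ) (x y : R),
      (u : R ⧸ p ^ 3) = Ideal.Quotient.mk (p ^ 3) x →
      (v : R ⧸ p ^ 3) = Ideal.Quotient.mk (p ^ 3) y →
      ¬ π ^ 3 ∣ (x - y) → u ≠ v := by
    intro u v x y hu hv hnd h
    apply hnd
    apply (aux_mk_eq π p hspan 3 x y).1
    rw [← hu, ← hv, h]
  have d10 : g ≠ 1 := hdiff g 1 (1 + π) 1 hgval (by rw [Units.val_one, hone])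
    (by have he : (1 + π) - 1 = π := by ring
        rw [he]; exact hn1)
  have d20 : g ^ 2 ≠ 1 := hdiff (g ^ 2) 1 (1 + π ^ 2) 1 hg2val (by rw [Units.val_one, hone])
    (by have he : (1 + π ^ 2) - 1 = π ^ 2 := by ring
        rw [he]; exact hn2)
  have d30 : g ^ 3 ≠ 1 := hdiff (g ^ 3) 1 (1 + π + π ^ 2) 1 hg3val (by rw [Units.val_one, hone])
    (by have he : (1 + π + π ^ 2) - 1 = π + π ^ 2 := by ring
        rw [he]; exact hn3)
  have d12 : g ≠ g ^ 2 := hdiff g (g ^ 2) (1 + π) (1 + π ^ 2) hgval hg2val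
    (by have he : (1 + π) - (1 + π ^ 2) = π - π ^ 2 := by ring
        rw [he]; exact hn4)
  have d13 : g ≠ g ^ 3 := hdiff g (g ^ 3) (1 + π) (1 + π + π ^ 2) hgval hg3val
    (by have he : (1 + π) - (1 + π + π ^ 2) = -(π ^ 2) := by ring
        rw [he, dvd_neg]; exact hn2)
  have d23 : g ^ 2 ≠ g ^ 3 := hdiff (g ^ 2) (g ^ 3) (1 + π ^ 2) (1 + π + π ^ 2) hg2val hg3val
    (by have he : (1 + π ^ 2) - (1 + π + π ^ 2) = -π := by ring
        rw [he, dvd_neg]; exact hn1)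
  have hclass : ∀ u : (R ⧸ p ^ 3)ˣ, u = 1 ∨ u = g ∨ u = g ^ 2 ∨ u = g ^ 3 := by
    intro u
    obtain ⟨x, hx, w, hw⟩ := aux_unit_rep π hπ.not_unit hdig p hspan 3 (by norm_num) u
    obtain ⟨c, hc01, hcd⟩ := aux_digits π hdig 2 w
    have hv : π ^ 2 ∣ (w - (c 0 + c 1 * π)) := by
      have he : ∑ i ∈ Finset.range 2, c i * π ^ i = c 0 + c 1 * π := by
        rw [Finset.sum_range_succ, Finset.sum_range_one]
        ring
      rwa [he] at hcd
    obtain ⟨v, hv⟩ := hv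
    have hux : (u : R ⧸ p ^ 3) = Ideal.Quotient.mk (p ^ 3) (1 + c 0 * π + c 1 * π ^ 2) := by
      rw [← hx, aux_mk_eq π p hspan]
      exact ⟨v, by linear_combination hw + π * hv⟩
    rcases hc01 0 with h0 | h0 <;> rcases hc01 1 with h1 | h1
    · left
      apply Units.ext
      rw [hux, h0, h1, Units.val_one, hone]
      congr 1
      ring
    · right; right; left
      apply Units.ext
      rw [hux, h0, h1, hg2val]
      congr 1
      ring
    · right; left
      apply Units.ext
      rw [hux, h0, h1, hgval]
      congr 1
      ring
    · right; right; right
      apply Units.ext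
      rw [hux, h0, h1, hg3val]
      congr 1
      ring
  have huniv : (Finset.univ : Finset (R ⧸ p ^ 3)ˣ) = {1, g, g ^ 2, g ^ 3} := by
    ext u
    simp only [Finset.mem_univ, true_iff, Finset.mem_insert, Finset.mem_singleton]
    exact hclass u
  have hm1 : (1 : (R ⧸ p ^ 3)ˣ) ∉ ({g, g ^ 2, g ^ 3} : Finset (R ⧸ p ^ 3)ˣ) := by
    simp only [Finset.mem_insert, Finset.mem_singleton]
    push_neg
    exact ⟨Ne.symm d10, Ne.symm d20, Ne.symm d30⟩
  have hm2 : g ∉ ({g ^ 2, g ^ 3} : Finset (R ⧸ p ^ 3)ˣ) := by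
    simp only [Finset.mem_insert, Finset.mem_singleton]
    push_neg
    exact ⟨d12, d13⟩
  have hm3 : (g ^ 2) ∉ ({g ^ 3} : Finset (R ⧸ p ^ 3)ˣ) := by
    simp only [Finset.mem_singleton]
    exact d23
  rw [huniv, Finset.prod_insert hm1, Finset.prod_insert hm2, Finset.prod_insert hm3,
    Finset.prod_singleton,
    Units.val_one, one_mul, hgval, hg2val, hg3val, ← map_mul, ← map_mul,
    show (1 : R ⧸ p ^ 3) + Ideal.Quotient.mk (p ^ 3) (π ^ 2)
      = Ideal.Quotient.mk (p ^ 3) (1 + π ^ 2) by rw [map_add, map_one],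
    aux_mk_eq π p hspan]
  exact ⟨d + d * π + 3 + π ^ 2 + d * π ^ 3, by linear_combination (π + π ^ 2 + π ^ 4) * hd⟩

lemma aux_n4 (π : R) [IsDomain R] (hπ : Prime π)
    (hsq2 : π ^ 2 ∣ 2)
    (p : Ideal R) (hspan : p = Ideal.span {π})
    (n : ℕ) (hn : 3 < n)
    [instU : Fintype (R ⧸ p ^ n)ˣ] :
    (∏ u : (R ⧸ p ^ n)ˣ, u) = 1 := by
  classical
  obtain ⟨m, rfl⟩ : ∃ m, n = m + 4 := ⟨n - 4, by omega⟩
  obtain ⟨d, hd⟩ := hsq2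
  have hone : (1 : R ⧸ p ^ (m + 4)) = Ideal.Quotient.mk (p ^ (m + 4)) 1 := (map_one _).symm
  have hva : (Ideal.Quotient.mk (p ^ (m + 4))) (1 + π ^ (m + 2)) *
      (Ideal.Quotient.mk (p ^ (m + 4))) (1 + π ^ (m + 2)) = 1 := by
    rw [← map_mul, hone, aux_mk_eq π p hspan]
    exact ⟨d + π ^ m, by linear_combination (π ^ (m + 2)) * hd⟩
  have hvb : (Ideal.Quotient.mk (p ^ (m + 4))) (1 + π ^ (m + 3)) *
      (Ideal.Quotient.mk (p ^ (m + 4))) (1 + π ^ (m + 3)) = 1 := by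
    rw [← map_mul, hone, aux_mk_eq π p hspan]
    exact ⟨d * π + π ^ (m + 2), by linear_combination (π ^ (m + 3)) * hd⟩
  set a : (R ⧸ p ^ (m + 4))ˣ := Units.mkOfMulEqOne _ _ hva with hadef
  set b : (R ⧸ p ^ (m + 4))ˣ := Units.mkOfMulEqOne _ _ hvb with hbdef
  have haval : (a : R ⧸ p ^ (m + 4)) = Ideal.Quotient.mk (p ^ (m + 4)) (1 + π ^ (m + 2)) := rfl
  have hbval : (b : R ⧸ p ^ (m + 4)) = Ideal.Quotient.mk (p ^ (m + 4)) (1 + π ^ (m + 3)) := rfl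
  have hw2 : ¬ π ∣ (1 - π) := by
    have := aux_not_dvd_one_add π hπ (-1)
    have he : (1 : R) + π * (-1) = 1 - π := by ring
    rwa [he] at this
  have hdiff : ∀ (u v : (R ⧸ p ^ (m + 4))ˣ) (x y : R),
      (u : R ⧸ p ^ (m + 4)) = Ideal.Quotient.mk (p ^ (m + 4)) x →
      (v : R ⧸ p ^ (m + 4)) = Ideal.Quotient.mk (p ^ (m + 4)) y →
      ¬ π ^ (m + 4) ∣ (x - y) → u ≠ v := by
    intro u v x y hu hv hnd h
    apply hnd
    apply (aux_mk_eq π p hspan (m + 4) x y).1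
    rw [← hu, ← hv, h]
  refine aux_prod_invol a b ?_ ?_ ?_ ?_ ?_
  · apply Units.ext
    rw [Units.val_mul, Units.val_one, haval]
    exact hva
  · apply Units.ext
    rw [Units.val_mul, Units.val_one, hbval]
    exact hvb
  · refine hdiff a 1 (1 + π ^ (m + 2)) 1 haval (by rw [Units.val_one, hone]) ?_
    have he : (1 + π ^ (m + 2)) - 1 = π ^ (m + 2) := by ring
    rw [he]
    exact aux_hnd π hπ (by omega)
  · refine hdiff b 1 (1 + π ^ (m + 3)) 1 hbval (by rw [Units.val_one, hone]) ?_
    have he : (1 + π ^ (m + 3)) - 1 = π ^ (m + 3) := by ring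
    rw [he]
    exact aux_hnd π hπ (by omega)
  · refine hdiff a b (1 + π ^ (m + 2)) (1 + π ^ (m + 3)) haval hbval ?_
    intro h
    refine aux_ndvd π hπ (j := m + 2) (n := m + 4) (by omega) (1 - π) hw2 ?_
    have he : π ^ (m + 2) * (1 - π) = (1 + π ^ (m + 2)) - (1 + π ^ (m + 3)) := by ring
    rwa [he]
end N34


open NumberField Polynomial IntermediateField

lemma aux_setup (k : ℕ) (hk : 1 ≤ k) (K : Type*) [Field K] [NumberField K]
    (ζ : RingOfIntegers K) (hζ : IsPrimitiveRoot ζ (2 ^ (k + 1)))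
    (hgen : ∀ x : RingOfIntegers K, x ∈ Algebra.adjoin ℤ ({ζ} : Set (RingOfIntegers K))) :
    Prime (1 - ζ) ∧ (1 - ζ) ^ 2 ∣ (2 : RingOfIntegers K) := by
  have hinj : Function.Injective (algebraMap (𝓞 K) K) := RingOfIntegers.coe_injective
  set z := (algebraMap (𝓞 K) K) ζ with hz
  have hζK : IsPrimitiveRoot z (2 ^ (k + 1)) := hζ.map_of_injective hinj
  have hzint : IsIntegral ℚ z := (hζK.isIntegral (by positivity)).tower_top
  have hL := IntermediateField.adjoin_simple_toSubalgebra_of_isAlgebraic hzint.isAlgebraic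
  have hOmem : ∀ o : 𝓞 K, (algebraMap (𝓞 K) K) o ∈ ℚ⟮z⟯ := by
    intro o
    refine Algebra.adjoin_induction ?_ ?_ ?_ ?_ (hgen o)
    · rintro x rfl
      exact IntermediateField.mem_adjoin_simple_self ℚ z
    · intro r
      simpa using intCast_mem ℚ⟮z⟯ r
    · intro x y _ _ hx hy
      rw [map_add]; exact add_mem hx hy
    · intro x y _ _ hx hy
      rw [map_mul]; exact mul_mem hx hy
  have hadj : ∀ x : K, x ∈ Algebra.adjoin ℚ ({z} : Set K) := by
    intro x
    obtain ⟨a, b, hb, rfl⟩ := IsFractionRing.div_surjective (A := 𝓞 K) x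
    have : (algebraMap (𝓞 K) K a) / (algebraMap (𝓞 K) K b) ∈ ℚ⟮z⟯ :=
      div_mem (hOmem a) (hOmem b)
    rw [← hL]
    exact this
  haveI hcyc : IsCyclotomicExtension {(2 : ℕ) ^ (k + 1)} ℚ K := by
    rw [IsCyclotomicExtension.iff_adjoin_eq_top]
    refine ⟨?_, ?_⟩
    · rintro n hn -
      rw [Set.mem_singleton_iff] at hn; subst hn
      exact ⟨z, by convert hζK using 2⟩
    · rw [eq_top_iff]
      rintro x -
      refine Algebra.adjoin_mono ?_ (hadj x)
      rintro y rfl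
      refine ⟨(2 : ℕ) ^ (k + 1), rfl, by positivity, ?_⟩
      have := hζK.pow_eq_one
      simpa [PNat.pow_coe] using this
  have hζK' : IsPrimitiveRoot z ((2 : ℕ) ^ (k + 1)) := by
    convert hζK using 1
  have hprime0 : Prime (hζK'.toInteger - 1) := hζK'.zeta_sub_one_prime
  have htoint : hζK'.toInteger = ζ := RingOfIntegers.ext rfl
  rw [htoint] at hprime0
  have hprime : Prime (1 - ζ) := by
    have := hprime0.neg
    rwa [neg_sub] at this
  refine ⟨hprime, ?_⟩
  have h2eval : (∏ μ ∈ primitiveRoots (2 ^ (k + 1)) (𝓞 K), (1 - μ)) = 2 := by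
    have hc := Polynomial.cyclotomic_eq_prod_X_sub_primitiveRoots hζ
    have he : Polynomial.eval 1 (Polynomial.cyclotomic (2 ^ (k + 1)) (𝓞 K)) = 2 :=
      Polynomial.eval_one_cyclotomic_prime_pow k
    rw [hc] at he
    simpa [Polynomial.eval_prod] using he
  have hdvd_each : ∀ μ ∈ primitiveRoots (2 ^ (k + 1)) (𝓞 K), (1 - ζ) ∣ (1 - μ) := by
    intro μ hμ
    have hμ' : μ ^ (2 ^ (k + 1)) = 1 :=
      ((mem_primitiveRoots (by positivity)).1 hμ).pow_eq_one
    haveI : NeZero (2 ^ (k + 1)) := ⟨by positivity⟩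
    obtain ⟨i, _, rfl⟩ := hζ.eq_pow_of_pow_eq_one hμ'
    simpa using sub_dvd_pow_sub_pow 1 ζ i
  have hpow : (1 - ζ) ^ ((primitiveRoots (2 ^ (k + 1)) (𝓞 K)).card) ∣ (2 : 𝓞 K) := by
    rw [← h2eval, ← Finset.prod_const]
    exact Finset.prod_dvd_prod_of_dvd _ _ hdvd_each
  have hcard : (primitiveRoots (2 ^ (k + 1)) (𝓞 K)).card = 2 ^ k := by
    rw [hζ.card_primitiveRoots, Nat.totient_prime_pow_succ Nat.prime_two]
    simp
  rw [hcard] at hpow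
  exact dvd_trans (pow_dvd_pow _ (by
    calc 2 = 2 ^ 1 := (pow_one 2).symm
    _ ≤ 2 ^ k := Nat.pow_le_pow_right (by norm_num) hk)) hpow



set_option synthInstance.maxHeartbeats 1000000
set_option maxHeartbeats 2000000

open NumberField

/-- Let `t > 1`, `ζ` a primitive `2^t`-th root of unity generating the ring of integers
`O = ℤ[ζ]` of a number field `K`, `p` the unique even prime ideal of `O`, and
`π = 1 - ζ`. Then the product of all elements of `(O/pⁿ)ˣ` is `1` for `n = 1`,
`1 + π̄` for `n = 2`, `1 + π̄²` for `n = 3`, and `1` for `n > 3`. -/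
theorem prod_units_quotient_cyclotomic
    (t : ℕ) (ht : 1 < t) (K : Type*) [Field K] [NumberField K]
    (ζ : RingOfIntegers K) (hζ : IsPrimitiveRoot ζ (2 ^ t))
    (hgen : ∀ x : RingOfIntegers K, x ∈ Algebra.adjoin ℤ ({ζ} : Set (RingOfIntegers K)))
    (p : Ideal (RingOfIntegers K)) (hp : p.IsPrime) (hpbot : p ≠ ⊥)
    (h2 : (2 : RingOfIntegers K) ∈ p)
    (huniq : ∀ q : Ideal (RingOfIntegers K), q.IsPrime → (2 : RingOfIntegers K) ∈ q → q = p) :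
    (letI := Ideal.finiteQuotientOfFreeOfNeBot (p ^ 1) (pow_ne_zero 1 hpbot)
     letI := Fintype.ofFinite (RingOfIntegers K ⧸ p ^ 1)ˣ
     (∏ u : (RingOfIntegers K ⧸ p ^ 1)ˣ, u) = 1) ∧
    (letI := Ideal.finiteQuotientOfFreeOfNeBot (p ^ 2) (pow_ne_zero 2 hpbot)
     letI := Fintype.ofFinite (RingOfIntegers K ⧸ p ^ 2)ˣ
     ((∏ u : (RingOfIntegers K ⧸ p ^ 2)ˣ, u) : RingOfIntegers K ⧸ p ^ 2) =
        1 + Ideal.Quotient.mk (p ^ 2) (1 - ζ)) ∧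
    (letI := Ideal.finiteQuotientOfFreeOfNeBot (p ^ 3) (pow_ne_zero 3 hpbot)
     letI := Fintype.ofFinite (RingOfIntegers K ⧸ p ^ 3)ˣ
     ((∏ u : (RingOfIntegers K ⧸ p ^ 3)ˣ, u) : RingOfIntegers K ⧸ p ^ 3) =
        1 + Ideal.Quotient.mk (p ^ 3) ((1 - ζ) ^ 2)) ∧
    (∀ n : ℕ, 3 < n →
      letI := Ideal.finiteQuotientOfFreeOfNeBot (p ^ n) (pow_ne_zero n hpbot)
      letI := Fintype.ofFinite (RingOfIntegers K ⧸ p ^ n)ˣ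
      (∏ u : (RingOfIntegers K ⧸ p ^ n)ˣ, u) = 1) := by
  obtain ⟨k, rfl⟩ : ∃ k, t = k + 1 := ⟨t - 1, by omega⟩
  have hk : 1 ≤ k := by omega
  obtain ⟨hπprime, hsq2⟩ := aux_setup k hk K ζ hζ hgen
  set π : RingOfIntegers K := 1 - ζ with hπdef
  have hπu : ¬ IsUnit π := hπprime.not_unit
  have hspan : p = Ideal.span {π} := by
    have hq : (Ideal.span {π} : Ideal (RingOfIntegers K)).IsPrime :=
      (Ideal.span_singleton_prime hπprime.ne_zero).2 hπprime
    have h2q : (2 : RingOfIntegers K) ∈ Ideal.span {π} :=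
      Ideal.mem_span_singleton.2 (dvd_trans (dvd_pow_self π two_ne_zero) hsq2)
    exact (huniq _ hq h2q).symm
  have hπ2 : π ∣ 2 := dvd_trans (dvd_pow_self π two_ne_zero) hsq2
  have hdig : ∀ y : RingOfIntegers K, π ∣ y ∨ π ∣ (y - 1) := by
    intro y
    have H : ∃ m : ℤ, π ∣ (y - (m : RingOfIntegers K)) := by
      refine Algebra.adjoin_induction ?_ ?_ ?_ ?_ (hgen y)
      · rintro x rfl
        refine ⟨1, ?_⟩
        have he : x - ((1 : ℤ) : RingOfIntegers K) = -π := by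
          rw [hπdef]; push_cast; ring
        rw [he]
        exact dvd_neg.2 dvd_rfl
      · intro r
        refine ⟨r, ?_⟩
        have he : (algebraMap ℤ (RingOfIntegers K)) r - ((r : ℤ) : RingOfIntegers K) = 0 := by
          simp
        rw [he]
        exact dvd_zero π
      · rintro x y _ _ ⟨m, hm⟩ ⟨m', hm'⟩
        refine ⟨m + m', ?_⟩
        have he : x + y - ((m + m' : ℤ) : RingOfIntegers K)
            = (x - (m : RingOfIntegers K)) + (y - (m' : RingOfIntegers K)) := by
          push_cast; ring
        rw [he]
        exact dvd_add hm hm'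
      · rintro x y _ _ ⟨m, hm⟩ ⟨m', hm'⟩
        refine ⟨m * m', ?_⟩
        have he : x * y - ((m * m' : ℤ) : RingOfIntegers K)
            = x * (y - (m' : RingOfIntegers K))
              + ((m' : ℤ) : RingOfIntegers K) * (x - (m : RingOfIntegers K)) := by
          push_cast; ring
        rw [he]
        exact dvd_add (hm'.mul_left x) (hm.mul_left _)
    obtain ⟨m, hm⟩ := H
    rcases Int.even_or_odd m with ⟨j, hj⟩ | ⟨j, hj⟩
    · left
      have h2m : π ∣ ((m : ℤ) : RingOfIntegers K) := by
        rw [hj]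
        push_cast
        have he : ((j : ℤ) : RingOfIntegers K) + ((j : ℤ) : RingOfIntegers K)
            = 2 * ((j : ℤ) : RingOfIntegers K) := by ring
        rw [he]
        exact hπ2.mul_right _
      rw [show y = (y - ((m : ℤ) : RingOfIntegers K)) + ((m : ℤ) : RingOfIntegers K) from by ring]
      exact dvd_add hm h2m
    · right
      have h2m : π ∣ (((m : ℤ) : RingOfIntegers K) - 1) := by
        rw [hj]
        push_cast
        have he : 2 * ((j : ℤ) : RingOfIntegers K) + 1 - 1
            = 2 * ((j : ℤ) : RingOfIntegers K) := by ring
        rw [he]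
        exact hπ2.mul_right _
      rw [show y - 1 = (y - ((m : ℤ) : RingOfIntegers K)) + (((m : ℤ) : RingOfIntegers K) - 1)
        from by ring]
      exact dvd_add hm h2m
  refine ⟨?_, ?_, ?_, ?_⟩
  · exact aux_n1 (instU := _) π hπu hdig p hspan
  · exact aux_n2 (instU := _) π hπprime hdig hsq2 p hspan
  · exact aux_n3 (instU := _) π hπprime hdig hsq2 p hspan
  · intro n hn
    exact aux_n4 (instU := _) π hπprime hsq2 p hspan n hn
end
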